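/- arXiv:0807.3321 — 5 statements merged into one kernel-verified Lean document; each statement's English description precedes it below -/
import Mathlib

section
/- The set ℰ = { Σ_{i=4}^∞ ε_i α^i : (ε_i)_{i≥4} ∈ 𝒟^∞ } is a compact and connected subset of ℝ × ℂ. -/
open MeasureTheory

noncomputable section

/-- `IsExpansion l ε` : `ε` encodes a sequence `(ε_i)_{i ≥ l}` of 0's and 1's containing
no four consecutive 1's (an element of `𝒟^∞`), extended by `0` for `i < l`. -/
def IsExpansion (l : ℤ) (ε : ℤ → ℕ) : Prop :=
  (∀ i, ε i ≤ 1) ∧ (∀ i, i < l → ε i = 0) ∧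
  (∀ i : ℤ, ¬ (ε i = 1 ∧ ε (i + 1) = 1 ∧ ε (i + 2) = 1 ∧ ε (i + 3) = 1))

/-- `ExpSum α ε z` : `z = Σ_{i=l}^∞ ε_i α^i` (the terms with `i < l` vanish). -/
def ExpSum (α : ℝ × ℂ) (ε : ℤ → ℕ) (z : ℝ × ℂ) : Prop :=
  HasSum (fun i : ℤ => (ε i : ℝ × ℂ) * α ^ i) z

/-- The Rauzy fractal `ℰ = { Σ_{i=4}^∞ ε_i α^i : (ε_i)_{i≥4} ∈ 𝒟^∞ }`. -/
def RauzyE (α : ℝ × ℂ) : Set (ℝ × ℂ) :=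
  { z | ∃ ε : ℤ → ℕ, IsExpansion 4 ε ∧ ExpSum α ε z }

/-!
Put `T(α) = {∑ dᵢ αⁱ : d ∈ 𝒟^∞}`, so that `ℰ = α⁴ T(α)`; norms on `ℝ × ℂ` are max norms.
`T(α)` is the continuous image of the compact space of admissible digit sequences. It is also the
intersection of the decreasing compact sets `Kₙ`, the unions of the closed balls of radius
`‖α‖ⁿ / (1 - ‖α‖)` around the partial sums `∑_{i<n} dᵢ αⁱ`, so it suffices that every `Kₙ` is
connected. Group the balls of `Kₙ` by a common prefix of their digit sequences and extend the prefix
by one digit: the group continuing with `0` meets the group continuing with `1` (if a `1` is allowed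
there) at the double point `1 + α² + α⁵ + α⁷ + ⋯ = α⁴ + α⁶ + α⁸ + ⋯`, which is the identity
`α⁴ = (1 + α)(1 + α²)` in disguise.
-/

open Metric Set

section DirectedIntersection

variable {X ι : Type*} [TopologicalSpace X] [T2Space X] [Nonempty ι] {K : ι → Set X}

theorem IsPreconnected.iInter_of_directed_isCompact (hdir : Directed (· ⊇ ·) K)
    (hcpt : ∀ i, IsCompact (K i)) (hconn : ∀ i, IsPreconnected (K i)) :
    IsPreconnected (⋂ i, K i) := by
  rw [isPreconnected_iff_subset_of_disjoint_closed]
  intro A B hA hB hcover hAB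
  obtain ⟨i₀⟩ := ‹Nonempty ι›
  have hL : IsCompact (⋂ i, K i) :=
    (hcpt i₀).of_isClosed_subset (isClosed_iInter fun i => (hcpt i).isClosed) (iInter_subset K i₀)
  have hdisj : Disjoint ((⋂ i, K i) ∩ A) ((⋂ i, K i) ∩ B) := by
    rw [disjoint_iff_inter_eq_empty, ← hAB]
    ext; simp only [mem_inter_iff]; tauto
  obtain ⟨U, V, hU, hV, hAU, hBV, hUV⟩ :=
    SeparatedNhds.of_isCompact_isCompact (hL.inter_right hA) (hL.inter_right hB) hdisj
  obtain ⟨i, hi⟩ : ∃ i, K i ⊆ U ∪ V := exists_subset_nhds_of_isCompact hdir hcpt fun x hx =>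
    (hU.union hV).mem_nhds <| (hcover hx).imp (fun h => hAU ⟨hx, h⟩) fun h => hBV ⟨hx, h⟩
  rcases (hconn i).subset_or_subset hU hV hUV hi with hKU | hKV
  · exact Or.inl fun x hx => (hcover hx).resolve_right fun hxB =>
      disjoint_left.1 hUV (hKU (iInter_subset K i hx)) (hBV ⟨hx, hxB⟩)
  · exact Or.inr fun x hx => (hcover hx).resolve_left fun hxA =>
      disjoint_left.1 hUV (hAU ⟨hx, hxA⟩) (hKV (iInter_subset K i hx))

theorem IsConnected.iInter_of_directed_isCompact (hdir : Directed (· ⊇ ·) K)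
    (hcpt : ∀ i, IsCompact (K i)) (hconn : ∀ i, IsConnected (K i)) :
    IsConnected (⋂ i, K i) :=
  ⟨IsCompact.nonempty_iInter_of_directed_nonempty_isCompact_isClosed K hdir
      (fun i => (hconn i).nonempty) hcpt fun i => (hcpt i).isClosed,
    IsPreconnected.iInter_of_directed_isCompact hdir hcpt fun i => (hconn i).isPreconnected⟩

end DirectedIntersection

theorem hasSum_int_iff_hasSum_nat_add {M : Type*} [AddCommMonoid M] [TopologicalSpace M]
    {f : ℤ → M} {l : ℤ} {a : M} (hf : ∀ i < l, f i = 0) :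
    HasSum f a ↔ HasSum (fun n : ℕ => f (n + l)) a := by
  refine (Function.Injective.hasSum_iff (g := fun n : ℕ => (n : ℤ) + l)
    (fun m n h => by simpa using h) fun i hi => hf i ?_).symm
  by_contra hli
  exact hi ⟨(i - l).toNat, by simp only; omega⟩

namespace Tetranacci

def Admissible (d : ℕ → Bool) : Prop :=
  ∀ j, ¬ (d j ∧ d (j + 1) ∧ d (j + 2) ∧ d (j + 3))

theorem isClosed_setOf_admissible : IsClosed {d : ℕ → Bool | Admissible d} := by
  simp only [Admissible, ofPred_forall]
  exact isClosed_iInter fun j =>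
    (isClosed_discrete {q : Bool × Bool × Bool × Bool | ¬ (q.1 ∧ q.2.1 ∧ q.2.2.1 ∧ q.2.2.2)}).preimage
      (f := fun d : ℕ → Bool => (d j, d (j + 1), d (j + 2), d (j + 3))) (by fun_prop)

def splice (d : ℕ → Bool) (k : ℕ) (t : ℕ → Bool) : ℕ → Bool :=
  fun i => if i < k then d i else t (i - k)

-- `0000101010…` and `1010010101…`: the two expansions of the double point
def zeroBranch : ℕ → Bool :=
  fun j => decide (4 ≤ j ∧ j % 2 = 0)

def oneBranch : ℕ → Bool :=
  fun j => decide (j = 0 ∨ j = 2 ∨ (5 ≤ j ∧ j % 2 = 1))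

theorem admissible_splice {d t : ℕ → Bool} {k : ℕ} (hd : Admissible d)
    (ht : ∀ j, ¬ (t j ∧ t (j + 1)))
    (hk : t 0 → ¬ ∃ j, j + 3 = k ∧ d j ∧ d (j + 1) ∧ d (j + 2)) :
    Admissible (splice d k t) := by
  rintro j ⟨h₀, h₁, h₂, h₃⟩
  simp only [splice] at h₀ h₁ h₂ h₃
  by_cases hj₃ : j + 3 < k
  · rw [if_pos (by omega)] at h₀ h₁ h₂
    rw [if_pos hj₃] at h₃
    exact hd j ⟨h₀, h₁, h₂, h₃⟩
  by_cases hj₂ : j + 2 < k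
  · rw [if_pos (by omega)] at h₀ h₁
    rw [if_pos hj₂] at h₂
    rw [if_neg hj₃, show j + 3 - k = 0 by omega] at h₃
    exact hk h₃ ⟨j, by omega, h₀, h₁, h₂⟩
  rw [if_neg hj₂] at h₂
  rw [if_neg hj₃, show j + 3 - k = j + 2 - k + 1 by omega] at h₃
  exact ht _ ⟨h₂, h₃⟩

theorem admissible_splice_zeroBranch {d : ℕ → Bool} (hd : Admissible d) (k : ℕ) :
    Admissible (splice d k zeroBranch) :=
  admissible_splice hd (fun j => by simp only [zeroBranch, decide_eq_true_eq]; omega)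
    (by simp [zeroBranch])

theorem admissible_splice_oneBranch {d : ℕ → Bool} (hd : Admissible d) {k : ℕ}
    (hk : ¬ ∃ j, j + 3 = k ∧ d j ∧ d (j + 1) ∧ d (j + 2)) :
    Admissible (splice d k oneBranch) :=
  admissible_splice hd (fun j => by simp only [oneBranch, decide_eq_true_eq]; omega) fun _ => hk

variable {R : Type*} [NormedCommRing R] {α : R}

def digitSum (α : R) (d : ℕ → Bool) : R :=
  ∑' i, if d i then α ^ i else 0

def partialDigitSum (α : R) (d : ℕ → Bool) (n : ℕ) : R :=
  ∑ i ∈ Finset.range n, if d i then α ^ i else 0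

def tile (α : R) : Set R :=
  digitSum α '' {d | Admissible d}

def approxTile (α : R) (n : ℕ) : Set R :=
  ⋃ e ∈ {e | Admissible e}, closedBall (partialDigitSum α e n) (‖α‖ ^ n / (1 - ‖α‖))

def cylinderCover (α : R) (d : ℕ → Bool) (k n : ℕ) : Set R :=
  ⋃ (e : ℕ → Bool) (_ : Admissible e ∧ ∀ i < k, e i = d i),
    closedBall (partialDigitSum α e n) (‖α‖ ^ n / (1 - ‖α‖))

theorem partialDigitSum_congr {d e : ℕ → Bool} {n : ℕ} (h : ∀ i < n, d i = e i) :
    partialDigitSum α d n = partialDigitSum α e n :=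
  Finset.sum_congr rfl fun i hi => by rw [h i (Finset.mem_range.1 hi)]

theorem isCompact_approxTile [ProperSpace R] (n : ℕ) : IsCompact (approxTile α n) := by
  have hfin : ((partialDigitSum α · n) '' {e | Admissible e}).Finite := by
    refine (finite_range fun w : Fin n → Bool => ∑ i, if w i then α ^ (i : ℕ) else 0).subset ?_
    rintro _ ⟨e, -, rfl⟩
    exact ⟨fun i => e i, (Finset.sum_range fun i => if e i then α ^ i else 0).symm⟩
  rw [approxTile, ← biUnion_image (g := fun c => closedBall c _)]
  exact hfin.isCompact_biUnion fun _ _ => isCompact_closedBall _ _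

theorem cylinderCover_zero (d : ℕ → Bool) (n : ℕ) : cylinderCover α d 0 n = approxTile α n := by
  simp [cylinderCover, approxTile]

theorem cylinderCover_self {d : ℕ → Bool} (hd : Admissible d) (n : ℕ) :
    cylinderCover α d n n = closedBall (partialDigitSum α d n) (‖α‖ ^ n / (1 - ‖α‖)) := by
  ext z
  simp only [cylinderCover, mem_iUnion, exists_prop]
  constructor
  · rintro ⟨e, ⟨-, he⟩, hz⟩
    rwa [partialDigitSum_congr he] at hz
  · exact fun hz => ⟨d, ⟨hd, fun _ _ => rfl⟩, hz⟩

theorem cylinderCover_eq_union {d e₀ e₁ : ℕ → Bool} {k : ℕ} (h₀ : ∀ i < k, e₀ i = d i)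
    (h₁ : ∀ i < k, e₁ i = d i) (h₀k : e₀ k = false) (h₁k : e₁ k = true) (n : ℕ) :
    cylinderCover α d k n = cylinderCover α e₀ (k + 1) n ∪ cylinderCover α e₁ (k + 1) n := by
  ext z
  simp only [cylinderCover, mem_union, mem_iUnion, exists_prop, Nat.forall_lt_succ_right]
  constructor
  · rintro ⟨e, ⟨he, hed⟩, hz⟩
    cases hek : e k
    · exact Or.inl ⟨e, ⟨he, fun i hi => (hed i hi).trans (h₀ i hi).symm, hek.trans h₀k.symm⟩, hz⟩
    · exact Or.inr ⟨e, ⟨he, fun i hi => (hed i hi).trans (h₁ i hi).symm, hek.trans h₁k.symm⟩, hz⟩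
  · rintro (⟨e, ⟨he, hee, -⟩, hz⟩ | ⟨e, ⟨he, hee, -⟩, hz⟩)
    · exact ⟨e, ⟨he, fun i hi => (hee i hi).trans (h₀ i hi)⟩, hz⟩
    · exact ⟨e, ⟨he, fun i hi => (hee i hi).trans (h₁ i hi)⟩, hz⟩

theorem cylinderCover_eq_empty {d : ℕ → Bool} {j k : ℕ} (hjk : j + 3 < k)
    (hd : d j ∧ d (j + 1) ∧ d (j + 2) ∧ d (j + 3)) (n : ℕ) : cylinderCover α d k n = ∅ := by
  simp only [cylinderCover, iUnion_eq_empty]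
  rintro e ⟨he, hed⟩
  refine absurd ?_ (he j)
  rwa [hed j (by omega), hed (j + 1) (by omega), hed (j + 2) (by omega), hed (j + 3) hjk]

variable [NormOneClass R]

theorem norm_digit_le (α : R) (d : ℕ → Bool) (i : ℕ) :
    ‖if d i then α ^ i else 0‖ ≤ ‖α‖ ^ i := by
  split_ifs
  · exact norm_pow_le α i
  · simp [pow_nonneg (norm_nonneg α) i]

theorem norm_digitSum_le (hα : ‖α‖ < 1) (d : ℕ → Bool) : ‖digitSum α d‖ ≤ (1 - ‖α‖)⁻¹ :=
  tsum_of_norm_bounded (hasSum_geometric_of_lt_one (norm_nonneg α) hα) (norm_digit_le α d)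

theorem approxTile_antitone (hα : ‖α‖ < 1) : Antitone (approxTile α) := by
  refine antitone_nat_of_succ_le fun n => iUnion₂_mono fun e _ => closedBall_subset_closedBall' ?_
  have hdist : dist (partialDigitSum α e (n + 1)) (partialDigitSum α e n) ≤ ‖α‖ ^ n := by
    rw [dist_eq_norm, partialDigitSum, Finset.sum_range_succ, ← partialDigitSum,
      add_sub_cancel_left]
    exact norm_digit_le α e n
  have hradius : ‖α‖ ^ (n + 1) / (1 - ‖α‖) + ‖α‖ ^ n = ‖α‖ ^ n / (1 - ‖α‖) := by
    field_simp [(sub_pos.2 hα).ne']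
    ring
  linarith

section Complete

variable [CompleteSpace R]

theorem summable_digits (hα : ‖α‖ < 1) (d : ℕ → Bool) :
    Summable fun i => if d i then α ^ i else 0 :=
  .of_norm_bounded (summable_geometric_of_lt_one (norm_nonneg α) hα) (norm_digit_le α d)

theorem digitSum_eq_partialDigitSum_add (hα : ‖α‖ < 1) (d : ℕ → Bool) (n : ℕ) :
    digitSum α d = partialDigitSum α d n + α ^ n * digitSum α (fun i => d (i + n)) := by
  rw [digitSum, ← (summable_digits hα d).sum_add_tsum_nat_add n, digitSum,
    ← (summable_digits hα _).tsum_mul_left]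
  congr 1
  refine tsum_congr fun i => ?_
  split_ifs <;> simp [pow_add, mul_comm]

theorem norm_digitSum_sub_partialDigitSum_le (hα : ‖α‖ < 1) (d : ℕ → Bool) (n : ℕ) :
    ‖digitSum α d - partialDigitSum α d n‖ ≤ ‖α‖ ^ n / (1 - ‖α‖) := by
  rw [digitSum_eq_partialDigitSum_add hα d n, add_sub_cancel_left, div_eq_mul_inv]
  exact (norm_mul_le _ _).trans <|
    mul_le_mul (norm_pow_le α n) (norm_digitSum_le hα _) (norm_nonneg _) (by positivity)

theorem continuous_digitSum (hα : ‖α‖ < 1) : Continuous (digitSum α) :=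
  continuous_tsum (fun i =>
      (continuous_of_discreteTopology (f := fun b : Bool => if b then α ^ i else 0)).comp
        (continuous_apply i))
    (summable_geometric_of_lt_one (norm_nonneg α) hα) fun i d => norm_digit_le α d i

theorem isCompact_tile (hα : ‖α‖ < 1) : IsCompact (tile α) :=
  isClosed_setOf_admissible.isCompact.image (continuous_digitSum hα)

theorem digitSum_splice (hα : ‖α‖ < 1) (d : ℕ → Bool) (k : ℕ) (t : ℕ → Bool) :
    digitSum α (splice d k t) = partialDigitSum α d k + α ^ k * digitSum α t := by
  rw [digitSum_eq_partialDigitSum_add hα _ k]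
  congr 1
  · exact partialDigitSum_congr fun i hi => if_pos hi
  · simp [splice]

theorem digitSum_zeroBranch_eq_oneBranch (hα : ‖α‖ < 1)
    (hroot : α ^ 4 = α ^ 3 + α ^ 2 + α + 1) :
    digitSum α zeroBranch = digitSum α oneBranch := by
  set p : ℕ → Bool := fun j => decide (j % 2 = 0)
  have hp : digitSum α p = 1 + α ^ 2 * digitSum α p := by
    conv_lhs => rw [digitSum_eq_partialDigitSum_add hα _ 2]
    simp [p, partialDigitSum, Finset.sum_range_succ]
  have h₀ : digitSum α zeroBranch = α ^ 4 * digitSum α p := by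
    rw [digitSum_eq_partialDigitSum_add hα _ 4, show (fun i => zeroBranch (i + 4)) = p from
      funext fun i => by simp only [zeroBranch, p, decide_eq_decide]; omega]
    simp [zeroBranch, partialDigitSum, Finset.sum_range_succ]
  have h₁ : digitSum α oneBranch = 1 + α ^ 2 + α ^ 5 * digitSum α p := by
    rw [digitSum_eq_partialDigitSum_add hα _ 5, show (fun i => oneBranch (i + 5)) = p from
      funext fun i => by simp only [oneBranch, p, decide_eq_decide]; omega]
    simp [oneBranch, partialDigitSum, Finset.sum_range_succ]
  rw [h₀, h₁]
  linear_combination (1 + α ^ 2) * hp + digitSum α p * (1 - α) * hroot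

theorem digitSum_mem_cylinderCover (hα : ‖α‖ < 1) {d e : ℕ → Bool} {k : ℕ} (he : Admissible e)
    (hed : ∀ i < k, e i = d i) (n : ℕ) : digitSum α e ∈ cylinderCover α d k n :=
  mem_iUnion₂.2 ⟨e, ⟨he, hed⟩, by
    rw [mem_closedBall, dist_eq_norm]
    exact norm_digitSum_sub_partialDigitSum_le hα e n⟩

theorem isConnected_cylinderCover [NormedSpace ℝ R] (hα : ‖α‖ < 1)
    (hroot : α ^ 4 = α ^ 3 + α ^ 2 + α + 1) {k n : ℕ} (hkn : k ≤ n) {d : ℕ → Bool}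
    (hd : Admissible d) : IsConnected (cylinderCover α d k n) := by
  induction hkn using Nat.decreasingInduction generalizing d with
  | self =>
    rw [cylinderCover_self hd]
    exact (convex_closedBall _ _).isConnected
      (nonempty_closedBall.2 (div_nonneg (by positivity) (sub_pos.2 hα).le))
  | of_succ k hkn ih =>
    have hsplit := cylinderCover_eq_union (α := α) (d := d) (e₀ := splice d k zeroBranch)
      (e₁ := splice d k oneBranch) (fun i hi => if_pos hi) (fun i hi => if_pos hi)
      (by simp [splice, zeroBranch]) (by simp [splice, oneBranch]) n
    have h₀ := admissible_splice_zeroBranch hd k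
    by_cases h111 : ∃ j, j + 3 = k ∧ d j ∧ d (j + 1) ∧ d (j + 2)
    · obtain ⟨j, hj, hd₀, hd₁, hd₂⟩ := h111
      rw [hsplit, cylinderCover_eq_empty (d := splice d k oneBranch) (j := j) (by omega) ?_,
        union_empty]
      · exact ih h₀
      · simp only [splice, if_pos (show j < k by omega), if_pos (show j + 1 < k by omega),
          if_pos (show j + 2 < k by omega), hj, Nat.sub_self]
        exact ⟨hd₀, hd₁, hd₂, by simp [oneBranch]⟩
    · have h₁ := admissible_splice_oneBranch hd h111
      have hdouble : digitSum α (splice d k zeroBranch) = digitSum α (splice d k oneBranch) := by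
        rw [digitSum_splice hα, digitSum_splice hα, digitSum_zeroBranch_eq_oneBranch hα hroot]
      rw [hsplit]
      refine IsConnected.union ⟨_, digitSum_mem_cylinderCover hα h₀ (fun _ _ => rfl) n, ?_⟩
        (ih h₀) (ih h₁)
      rw [hdouble]
      exact digitSum_mem_cylinderCover hα h₁ (fun _ _ => rfl) n

theorem tile_eq_iInter_approxTile (hα : ‖α‖ < 1) : tile α = ⋂ n, approxTile α n := by
  refine Subset.antisymm ?_ fun z hz => ?_
  · rintro _ ⟨e, he, rfl⟩
    refine mem_iInter.2 fun n => ?_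
    rw [← cylinderCover_zero e]
    exact digitSum_mem_cylinderCover hα he (by simp) n
  rw [← (isCompact_tile hα).isClosed.closure_eq, Metric.mem_closure_iff]
  intro ε hε
  have hradius : Filter.Tendsto (fun n => ‖α‖ ^ n / (1 - ‖α‖)) Filter.atTop (nhds 0) := by
    simpa using (tendsto_pow_atTop_nhds_zero_of_lt_one (norm_nonneg α) hα).div_const (1 - ‖α‖)
  obtain ⟨n, hn⟩ := (hradius.eventually (gt_mem_nhds (half_pos hε))).exists
  obtain ⟨e, he, hze⟩ := mem_iUnion₂.1 (mem_iInter.1 hz n)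
  refine ⟨digitSum α e, ⟨e, he, rfl⟩, ?_⟩
  calc dist z (digitSum α e)
      ≤ dist z (partialDigitSum α e n) + dist (digitSum α e) (partialDigitSum α e n) :=
        dist_triangle_right _ _ _
    _ ≤ ‖α‖ ^ n / (1 - ‖α‖) + ‖α‖ ^ n / (1 - ‖α‖) := by
        gcongr
        · exact mem_closedBall.1 hze
        · rw [dist_eq_norm]; exact norm_digitSum_sub_partialDigitSum_le hα e n
    _ < ε := by linarith

end Complete

theorem isConnected_tile [ProperSpace R] [NormedSpace ℝ R] (hα : ‖α‖ < 1)
    (hroot : α ^ 4 = α ^ 3 + α ^ 2 + α + 1) : IsConnected (tile α) := by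
  rw [tile_eq_iInter_approxTile hα]
  refine .iInter_of_directed_isCompact (approxTile_antitone hα).directed_ge isCompact_approxTile
    fun n => ?_
  rw [← cylinderCover_zero (fun _ => false)]
  exact isConnected_cylinderCover hα hroot n.zero_le fun _ h => by simp at h

end Tetranacci

open Tetranacci

theorem expSum_iff_digitSum {α : ℝ × ℂ} (hα : ‖α‖ < 1) {ε : ℤ → ℕ} {d : ℕ → Bool}
    (hlow : ∀ i < 4, ε i = 0) (hε : ∀ n : ℕ, ε (n + 4) = if d n then 1 else 0) {z : ℝ × ℂ} :
    ExpSum α ε z ↔ α ^ 4 * digitSum α d = z := by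
  rw [ExpSum, hasSum_int_iff_hasSum_nat_add fun i hi => by simp [hlow i hi]]
  have hterm : (fun n : ℕ => (ε (n + 4) : ℝ × ℂ) * α ^ ((n : ℤ) + 4))
      = fun n => α ^ 4 * if d n then α ^ n else 0 := by
    funext n
    rw [hε n, show (n : ℤ) + 4 = ((n + 4 : ℕ) : ℤ) by push_cast; rfl, zpow_natCast, pow_add]
    split_ifs <;> simp [mul_comm]
  rw [hterm]
  exact ⟨((summable_digits hα d).hasSum.mul_left _).unique,
    fun h => h ▸ (summable_digits hα d).hasSum.mul_left _⟩

theorem mem_rauzyE_iff {α : ℝ × ℂ} (hα : ‖α‖ < 1) {z : ℝ × ℂ} :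
    z ∈ RauzyE α ↔ ∃ d, Admissible d ∧ α ^ 4 * digitSum α d = z := by
  constructor
  · rintro ⟨ε, ⟨hle, hlow, hno⟩, hz⟩
    refine ⟨fun n => decide (ε (n + 4) = 1), fun j hj => hno (j + 4) ?_,
      (expSum_iff_digitSum hα hlow fun n => ?_).1 hz⟩
    · simpa [add_right_comm _ (4 : ℤ)] using hj
    · rcases Nat.le_one_iff_eq_zero_or_eq_one.1 (hle (n + 4)) with h | h <;> simp [h]
  · rintro ⟨d, hd, rfl⟩
    set ε : ℤ → ℕ := fun i => if 4 ≤ i ∧ d (i - 4).toNat then 1 else 0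
    have hlow : ∀ i < 4, ε i = 0 := fun i hi => if_neg fun h => absurd h.1 (by omega)
    have hone : ∀ i, ε i = 1 → 4 ≤ i ∧ d (i - 4).toNat := fun i h => by
      by_contra hc
      simp [ε, if_neg hc] at h
    refine ⟨ε, ⟨fun i => by simp only [ε]; split_ifs <;> simp, hlow, ?_⟩,
      (expSum_iff_digitSum hα hlow fun n => by simp [ε]).2 rfl⟩
    rintro i ⟨h₀, h₁, h₂, h₃⟩
    obtain ⟨hi, hd₀⟩ := hone _ h₀
    refine hd (i - 4).toNat ⟨hd₀, ?_, ?_, ?_⟩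
    · rw [show (i - 4).toNat + 1 = (i + 1 - 4).toNat by omega]; exact (hone _ h₁).2
    · rw [show (i - 4).toNat + 2 = (i + 2 - 4).toNat by omega]; exact (hone _ h₂).2
    · rw [show (i - 4).toNat + 3 = (i + 3 - 4).toNat by omega]; exact (hone _ h₃).2

theorem rauzyE_eq_image_tile {α : ℝ × ℂ} (hα : ‖α‖ < 1) : RauzyE α = (α ^ 4 * ·) '' tile α := by
  ext z
  simp [mem_rauzyE_iff hα, tile]

theorem rauzy_compact_connected_general (β₂ : ℝ) (β₃ : ℂ)
    (hβ₂neg : -1 < β₂) (hβ₂pos : β₂ < 0)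
    (hβ₂root : β₂ ^ 4 = β₂ ^ 3 + β₂ ^ 2 + β₂ + 1)
    (hβ₃abs : ‖β₃‖ < 1)
    (hβ₃root : β₃ ^ 4 = β₃ ^ 3 + β₃ ^ 2 + β₃ + 1)
    (α : ℝ × ℂ) (hα : α = (β₂, β₃)) :
    IsCompact (RauzyE α) ∧ IsConnected (RauzyE α) := by
  subst hα
  have hnorm : ‖((β₂, β₃) : ℝ × ℂ)‖ < 1 := by
    rw [Prod.norm_mk, Real.norm_eq_abs]
    exact max_lt (abs_lt.2 ⟨hβ₂neg, by linarith⟩) hβ₃abs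
  have hroot : ((β₂, β₃) : ℝ × ℂ) ^ 4 = (β₂, β₃) ^ 3 + (β₂, β₃) ^ 2 + (β₂, β₃) + 1 := by
    ext <;> simp [hβ₂root, hβ₃root]
  rw [rauzyE_eq_image_tile hnorm]
  exact ⟨(isCompact_tile hnorm).image (continuous_const_mul _),
    (isConnected_tile hnorm hroot).image _ (continuous_const_mul _).continuousOn⟩

theorem rauzy_compact_connected (β β₂ : ℝ) (β₃ : ℂ)
    (hβ : 1 < β) (hβroot : β ^ 4 = β ^ 3 + β ^ 2 + β + 1)
    (hβ₂neg : -1 < β₂) (hβ₂pos : β₂ < 0)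
    (hβ₂root : β₂ ^ 4 = β₂ ^ 3 + β₂ ^ 2 + β₂ + 1)
    (hβ₃abs : ‖β₃‖ < 1) (hβ₃im : β₃.im ≠ 0)
    (hβ₃root : β₃ ^ 4 = β₃ ^ 3 + β₃ ^ 2 + β₃ + 1)
    (α : ℝ × ℂ) (hα : α = (β₂, β₃)) :
    IsCompact (RauzyE α) ∧ IsConnected (RauzyE α) :=
  rauzy_compact_connected_general β₂ β₃ hβ₂neg hβ₂pos hβ₂root hβ₃abs hβ₃root α hα
end
end

section
/- Let (ε_i)_{i≥0} and (ε'_i)_{i≥0} be two sequences in 𝒟^∞. Then |Σ_{i=0}^∞ (ε_i - ε'_i) β₂ⁱ| ≤ 1/(1+β₂), and |Σ_{i=0}^∞ (ε_i - ε'_i) β₃ⁱ| ≤ C/(1 - |β₃|⁶), where C = max{ |Σ_{i=0}^5 (c_i - d_i) β₃ⁱ| : (c_i)_{0≤i≤5}, (d_i)_{0≤i≤5} ∈ 𝒟 }. -/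
open MeasureTheory

noncomputable section

/-- A finite word `c₀ c₁ … c₅ ∈ 𝒟` of length 6 : digits 0,1, no four consecutive 1's. -/
def IsWord6 (c : ℕ → ℕ) : Prop :=
  (∀ i, c i ≤ 1) ∧ (∀ i, 6 ≤ i → c i = 0) ∧
  (∀ i : ℕ, ¬ (c i = 1 ∧ c (i + 1) = 1 ∧ c (i + 2) = 1 ∧ c (i + 3) = 1))

/-! The coefficients `ε_i - ε'_i` lie in `{-1, 0, 1}`, so for `β₂` the sum is dominated by the
geometric series `∑ |β₂|^i = 1 / (1 + β₂)`. For `β₃` the series is cut into blocks of six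
consecutive terms: the `k`-th block is `β₃^(6k)` times `∑_{j<6} (c_j - d_j) β₃^j` for two length-6
windows `c, d ∈ 𝒟` of `ε, ε'`, so its norm is at most `C ‖β₃‖^(6k)`, and summing this geometric
series gives `C / (1 - ‖β₃‖^6)`. -/

open Finset Filter Topology

lemma Finset.sum_range_mul_eq_sum_blocks {M : Type*} [AddCommMonoid M] (g : ℕ → M) (n K : ℕ) :
    ∑ i ∈ range (K * n), g i = ∑ k ∈ range K, ∑ j ∈ range n, g (k * n + j) := by
  induction K with
  | zero => simp
  | succ K ih => rw [Nat.succ_mul, sum_range_add, ih, sum_range_succ]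

lemma norm_tsum_le_of_norm_block_sum_le {E : Type*} [SeminormedAddCommGroup E] {g : ℕ → E}
    (hg : Summable g) {n : ℕ} (hn : 0 < n) {C r : ℝ} (hr₀ : 0 ≤ r) (hr₁ : r < 1)
    (hblock : ∀ k, ‖∑ j ∈ range n, g (k * n + j)‖ ≤ C * r ^ k) :
    ‖∑' i, g i‖ ≤ C / (1 - r) := by
  have hC : 0 ≤ C := by simpa using (norm_nonneg _).trans (hblock 0)
  have hpartial : Tendsto (fun K => ‖∑ i ∈ range (K * n), g i‖) atTop (𝓝 ‖∑' i, g i‖) :=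
    (hg.hasSum.tendsto_sum_nat.comp
      (tendsto_atTop_mono (fun K => Nat.le_mul_of_pos_right K hn) tendsto_id)).norm
  refine le_of_tendsto' hpartial fun K => ?_
  calc ‖∑ i ∈ range (K * n), g i‖
      ≤ ∑ k ∈ range K, C * r ^ k := by
        rw [sum_range_mul_eq_sum_blocks]
        exact (norm_sum_le _ _).trans (sum_le_sum fun k _ => hblock k)
    _ ≤ ∑' k, C * r ^ k :=
        ((summable_geometric_of_lt_one hr₀ hr₁).mul_left C).sum_le_tsum _
          fun k _ => mul_nonneg hC (pow_nonneg hr₀ k)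
    _ = C / (1 - r) := by rw [tsum_mul_left, tsum_geometric_of_lt_one hr₀ hr₁, div_eq_mul_inv]

lemma norm_tsum_mul_pow_le_of_window {𝕜 : Type*} [NormedField 𝕜] {a : ℕ → 𝕜} {z : 𝕜}
    (hz : ‖z‖ < 1) (hs : Summable fun i => a i * z ^ i) {n : ℕ} (hn : 0 < n) {C : ℝ}
    (hwin : ∀ k, ‖∑ j ∈ range n, a (k * n + j) * z ^ j‖ ≤ C) :
    ‖∑' i, a i * z ^ i‖ ≤ C / (1 - ‖z‖ ^ n) := by
  refine norm_tsum_le_of_norm_block_sum_le hs hn (by positivity)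
    (pow_lt_one₀ (norm_nonneg z) hz hn.ne') fun k => ?_
  have hfactor : ∑ j ∈ range n, a (k * n + j) * z ^ (k * n + j) =
      z ^ (k * n) * ∑ j ∈ range n, a (k * n + j) * z ^ j := by
    rw [mul_sum]
    exact sum_congr rfl fun j _ => by rw [pow_add]; ring
  rw [hfactor, norm_mul, norm_pow, mul_comm, ← pow_mul, mul_comm n k]
  exact mul_le_mul_of_nonneg_right (hwin k) (by positivity)

lemma summable_mul_pow_of_norm_le_one {𝕜 : Type*} [NormedField 𝕜] [CompleteSpace 𝕜]
    {a : ℕ → 𝕜} {z : 𝕜} (ha : ∀ i, ‖a i‖ ≤ 1) (hz : ‖z‖ < 1) :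
    Summable fun i => a i * z ^ i :=
  .of_norm_bounded (summable_geometric_of_lt_one (norm_nonneg z) hz) fun i => by
    rw [norm_mul, norm_pow]
    exact mul_le_of_le_one_left (by positivity) (ha i)

lemma norm_natCast_sub_natCast_le_one {R : Type*} [SeminormedRing R] [NormOneClass R]
    {a b : ℕ} (ha : a ≤ 1) (hb : b ≤ 1) : ‖(a : R) - b‖ ≤ 1 := by
  interval_cases a <;> interval_cases b <;> simp

lemma IsExpansion.isWord6_window {l : ℤ} {ε : ℤ → ℕ} (hε : IsExpansion l ε) (m : ℤ) :
    IsWord6 fun j => if j < 6 then ε (m + j) else 0 := by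
  refine ⟨fun i => ?_, fun i hi => if_neg (by omega), fun i ⟨h₀, h₁, h₂, h₃⟩ => ?_⟩
  · dsimp only
    split_ifs
    exacts [hε.1 _, zero_le_one]
  · have hi : i + 3 < 6 := by
      by_contra h
      simp [h] at h₃
    simp only [if_pos hi, if_pos (by omega : i < 6), if_pos (by omega : i + 1 < 6),
      if_pos (by omega : i + 2 < 6)] at h₀ h₁ h₂ h₃
    refine hε.2.2 (m + i) ⟨h₀, ?_, ?_, ?_⟩ <;> push_cast at h₁ h₂ h₃ <;> rwa [add_assoc]

theorem expansion_difference_bounds_general (β₂ : ℝ) (β₃ : ℂ)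
    (hβ₂neg : -1 < β₂) (hβ₂pos : β₂ < 0)
    (hβ₃abs : ‖β₃‖ < 1)
    (ε ε' : ℤ → ℕ) (hε : IsExpansion 0 ε) (hε' : IsExpansion 0 ε')
    (C : ℝ)
    (hC : IsGreatest { r : ℝ | ∃ c d : ℕ → ℕ, IsWord6 c ∧ IsWord6 d ∧
      r = ‖∑ i ∈ Finset.range 6, ((c i : ℂ) - (d i : ℂ)) * β₃ ^ i‖ } C) :
    |∑' i : ℕ, ((ε (i : ℤ) : ℝ) - (ε' (i : ℤ) : ℝ)) * β₂ ^ i| ≤ 1 / (1 + β₂) ∧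
    ‖∑' i : ℕ, ((ε (i : ℤ) : ℂ) - (ε' (i : ℤ) : ℂ)) * β₃ ^ i‖
      ≤ C / (1 - ‖β₃‖ ^ 6) := by
  have hdigit {R : Type} [SeminormedRing R] [NormOneClass R] (i : ℤ) : ‖(ε i : R) - ε' i‖ ≤ 1 :=
    norm_natCast_sub_natCast_le_one (hε.1 i) (hε'.1 i)
  have hβ₂abs : ‖β₂‖ < 1 := abs_lt.mpr ⟨hβ₂neg, hβ₂pos.trans one_pos⟩
  constructor
  · have hgeom := norm_tsum_mul_pow_le_of_window (a := fun i => (ε i : ℝ) - ε' i) (C := 1)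
      hβ₂abs (summable_mul_pow_of_norm_le_one (fun i => hdigit i) hβ₂abs) one_pos
      fun k => by simpa using hdigit (R := ℝ) k
    rwa [Real.norm_eq_abs, Real.norm_eq_abs, abs_of_neg hβ₂pos, pow_one, sub_neg_eq_add] at hgeom
  · refine norm_tsum_mul_pow_le_of_window hβ₃abs
      (summable_mul_pow_of_norm_le_one (fun i => hdigit i) hβ₃abs) (by norm_num)
      fun k => hC.2 ⟨_, _, hε.isWord6_window (k * 6 : ℕ), hε'.isWord6_window (k * 6 : ℕ), ?_⟩
    exact congrArg _ (sum_congr rfl fun j hj => by simp [Finset.mem_range.mp hj])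

theorem expansion_difference_bounds (β β₂ : ℝ) (β₃ : ℂ)
    (hβ : 1 < β) (hβroot : β ^ 4 = β ^ 3 + β ^ 2 + β + 1)
    (hβ₂neg : -1 < β₂) (hβ₂pos : β₂ < 0)
    (hβ₂root : β₂ ^ 4 = β₂ ^ 3 + β₂ ^ 2 + β₂ + 1)
    (hβ₃abs : ‖β₃‖ < 1) (hβ₃im : β₃.im ≠ 0)
    (hβ₃root : β₃ ^ 4 = β₃ ^ 3 + β₃ ^ 2 + β₃ + 1)
    (ε ε' : ℤ → ℕ) (hε : IsExpansion 0 ε) (hε' : IsExpansion 0 ε')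
    (C : ℝ)
    (hC : IsGreatest { r : ℝ | ∃ c d : ℕ → ℕ, IsWord6 c ∧ IsWord6 d ∧
      r = ‖∑ i ∈ Finset.range 6, ((c i : ℂ) - (d i : ℂ)) * β₃ ^ i‖ } C) :
    |∑' i : ℕ, ((ε (i : ℤ) : ℝ) - (ε' (i : ℤ) : ℝ)) * β₂ ^ i| ≤ 1 / (1 + β₂) ∧
    ‖∑' i : ℕ, ((ε (i : ℤ) : ℂ) - (ε' (i : ℤ) : ℂ)) * β₃ ^ i‖
      ≤ C / (1 - ‖β₃‖ ^ 6) :=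
  expansion_difference_bounds_general β₂ β₃ hβ₂neg hβ₂pos hβ₃abs ε ε' hε hε' C hC
end
end

section
/- Let x = Σ_{i=l}^∞ ε_i αⁱ and y = Σ_{i=l}^∞ ε'_i αⁱ, where ε=(ε_i)_{i≥l} and ε'=(ε'_i)_{i≥l} belong to 𝒟^∞. Then x = y if and only if the set S(ε,ε') = { A_k(ε,ε') : k ≥ l } is finite. -/
open MeasureTheory

noncomputable section

/-- `A_k(ε,ε') = α^{3-k} Σ_{i=l}^k (ε_i - ε'_i) α^i`. -/
def Adig (α : ℝ × ℂ) (l : ℤ) (ε ε' : ℤ → ℕ) (k : ℤ) : ℝ × ℂ :=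
  α ^ (3 - k) * ∑ i ∈ Finset.Icc l k, ((ε i : ℝ × ℂ) - (ε' i : ℝ × ℂ)) * α ^ i

/-!
Write `d = ε - ε'` and `T_k(r) = r ^ (3 - k) * ∑_{i=l}^k d_i r ^ i`, so that
`A_k = (T_k(β₂), T_k(β₃))`.

If `x ≠ y`, one of the convergent series `∑ d_i r ^ i` (`r = β₂` or `β₃`, `0 < |r| < 1`) has a
nonzero sum, and the factor `r ^ (3 - k)` makes `T_k(r)` unbounded.

If `x = y`, then `T_k(r) = -r ^ (3 - k) ∑_{i>k} d_i r ^ i` is bounded by `|r|⁴ / (1 - |r|)` for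
`r = β₂, β₃, β̄₃`, and `T_k(β)` is bounded by `β⁴ / (β - 1)` because
`T_{k+1} = T_k / r + d_{k+1} r³`. The same recursion, together with `r⁻¹ = r³ - r² - r - 1` for
every root of `P`, writes `T_k(r) = c₀ + c₁ r + c₂ r² + c₃ r³` with an integer vector `c` that
depends on `k` but not on the root. Inverting the Vandermonde matrix of the four distinct roots
bounds these vectors, so only finitely many values `A_k` occur.
-/

open Filter Topology Finset

section ScaledPartialSum

variable {K : Type*} [Field K]

def scaledPartialSum (r : K) (a : ℤ → K) (l k : ℤ) : K :=
  r ^ (3 - k) * ∑ i ∈ Icc l k, a i * r ^ i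

theorem scaledPartialSum_of_lt {r : K} {a : ℤ → K} {l k : ℤ} (hk : k < l) :
    scaledPartialSum r a l k = 0 := by
  simp [scaledPartialSum, Icc_eq_empty_of_lt hk]

theorem scaledPartialSum_add_one {r : K} (hr : r ≠ 0) (a : ℤ → K) {l k : ℤ} (hk : l ≤ k + 1) :
    scaledPartialSum r a l (k + 1) = r⁻¹ * scaledPartialSum r a l k + a (k + 1) * r ^ 3 := by
  have hpow : r ^ (3 - (k + 1)) = r⁻¹ * r ^ (3 - k) := by
    rw [show 3 - (k + 1) = 3 - k - 1 by ring, zpow_sub_one₀ hr, mul_comm]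
  have hcancel : r ^ (3 - (k + 1)) * r ^ (k + 1) = r ^ 3 := by
    rw [← zpow_add₀ hr]; norm_num
  rw [scaledPartialSum, scaledPartialSum, ← insert_Icc_right_eq_Icc_add_one hk,
    sum_insert (by simp), mul_add, ← mul_assoc, mul_comm _ (a _), mul_assoc, hcancel, hpow,
    mul_assoc, add_comm]

end ScaledPartialSum

section CoeffEval

variable {R : Type*} [CommRing R]

def coeffEval {n : ℕ} (r : R) (c : Fin n → ℤ) : R :=
  ∑ j, (c j : R) * r ^ (j : ℕ)

theorem map_coeffEval {S : Type*} [CommRing S] (f : R →+* S) {n : ℕ} (r : R) (c : Fin n → ℤ) :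
    f (coeffEval r c) = coeffEval (f r) c := by
  simp [coeffEval]

-- The coordinates of `r⁻¹ * (c₀ + c₁ r + c₂ r² + c₃ r³) + e r³`, using `r⁻¹ = r³ - r² - r - 1`.
def invStep (c : Fin 4 → ℤ) (e : ℤ) : Fin 4 → ℤ :=
  ![c 1 - c 0, c 2 - c 0, c 3 - c 0, c 0 + e]

variable {K : Type*} [Field K]

theorem ne_zero_of_root {r : K} (hr : r ^ 4 = r ^ 3 + r ^ 2 + r + 1) : r ≠ 0 := by
  rintro rfl
  norm_num at hr

theorem coeffEval_invStep {r : K} (hr : r ^ 4 = r ^ 3 + r ^ 2 + r + 1) (c : Fin 4 → ℤ) (e : ℤ) :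
    coeffEval r (invStep c e) = r⁻¹ * coeffEval r c + e * r ^ 3 := by
  have hinv : r⁻¹ = r ^ 3 - r ^ 2 - r - 1 :=
    inv_eq_of_mul_eq_one_right (by linear_combination hr)
  simp only [coeffEval, invStep, Fin.sum_univ_four, Matrix.cons_val, Fin.coe_ofNat_eq_mod,
    Nat.reduceMod, Int.cast_sub, Int.cast_add, hinv]
  linear_combination (-(c 1 + c 2 * r + c 3 * r ^ 2 : K)) * hr

theorem exists_coeffEval_eq_scaledPartialSum (d : ℤ → ℤ) (l k : ℤ) :
    ∃ c : Fin 4 → ℤ, ∀ (K : Type) [Field K] (r : K), r ^ 4 = r ^ 3 + r ^ 2 + r + 1 →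
      scaledPartialSum r (fun i => (d i : K)) l k = coeffEval r c := by
  have hzero (k : ℤ) (hk : k < l) : ∃ c : Fin 4 → ℤ, ∀ (K : Type) [Field K] (r : K),
      r ^ 4 = r ^ 3 + r ^ 2 + r + 1 → scaledPartialSum r (fun i => (d i : K)) l k = coeffEval r c :=
    ⟨0, fun K _ r _ => by simp [scaledPartialSum_of_lt hk, coeffEval]⟩
  refine Int.inductionOn' k (l - 1) (hzero _ (by omega)) ?_ fun k hk _ => hzero _ (by omega)
  rintro k hk ⟨c, hc⟩
  refine ⟨invStep c (d (k + 1)), fun K _ r hr => ?_⟩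
  rw [scaledPartialSum_add_one (ne_zero_of_root hr) _ (by omega), hc K r hr,
    coeffEval_invStep hr]

end CoeffEval

theorem sum_Icc_add_natCast {M : Type*} [AddCommMonoid M] (f : ℤ → M) (l : ℤ) (n : ℕ) :
    ∑ i ∈ Icc l (l + n), f i = ∑ m ∈ range (n + 1), f (l + m) := by
  induction n with
  | zero => simp
  | succ n ih =>
    rw [sum_range_succ, ← ih, Nat.cast_succ, ← add_assoc,
      ← insert_Icc_right_eq_Icc_add_one (by omega), sum_insert (by simp)]
    exact add_comm _ _

theorem HasSum.comp_add_natCast {M : Type*} [AddCommMonoid M] [TopologicalSpace M]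
    {g : ℤ → M} {l : ℤ} {w : M} (h : HasSum g w) (hg : ∀ i < l, g i = 0) :
    HasSum (fun n : ℕ => g (l + n)) w := by
  refine (Function.Injective.hasSum_iff (g := fun n : ℕ => l + n)
    (fun a b h => by simpa using h) fun i hi => hg i ?_).2 h
  by_contra hli
  exact hi ⟨(i - l).toNat, by simp; omega⟩

section Normed

variable {𝕜 : Type*} [NormedField 𝕜] {r : 𝕜} {a : ℤ → 𝕜} {l : ℤ}

theorem norm_scaledPartialSum_le_of_one_lt (hr : 1 < ‖r‖) (ha : ∀ i, ‖a i‖ ≤ 1) (k : ℤ) :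
    ‖scaledPartialSum r a l k‖ ≤ ‖r‖ ^ 4 / (‖r‖ - 1) := by
  have hzero (k : ℤ) (hk : k < l) : ‖scaledPartialSum r a l k‖ ≤ ‖r‖ ^ 4 / (‖r‖ - 1) := by
    rw [scaledPartialSum_of_lt hk, norm_zero]
    exact div_nonneg (by positivity) (by linarith)
  refine Int.inductionOn' k (l - 1) (hzero _ (by omega)) ?_ fun k hk _ => hzero _ (by omega)
  intro k hk ih
  rw [scaledPartialSum_add_one (norm_pos_iff.1 (by linarith)) a (by omega)]
  calc ‖r⁻¹ * scaledPartialSum r a l k + a (k + 1) * r ^ 3‖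
      ≤ ‖r‖⁻¹ * ‖scaledPartialSum r a l k‖ + ‖a (k + 1)‖ * ‖r‖ ^ 3 :=
        (norm_add_le _ _).trans_eq (by simp only [norm_mul, norm_inv, norm_pow])
    _ ≤ ‖r‖⁻¹ * (‖r‖ ^ 4 / (‖r‖ - 1)) + 1 * ‖r‖ ^ 3 := by gcongr; exact ha _
    _ = ‖r‖ ^ 4 / (‖r‖ - 1) := by
        have : ‖r‖ - 1 ≠ 0 := by linarith
        field_simp
        ring

theorem norm_scaledPartialSum_le_of_hasSum_zero (hr0 : r ≠ 0) (hr : ‖r‖ < 1)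
    (ha : ∀ i, ‖a i‖ ≤ 1) (hal : ∀ i < l, a i = 0) (hsum : HasSum (fun i => a i * r ^ i) 0)
    {k : ℤ} (hk : l ≤ k) :
    ‖scaledPartialSum r a l k‖ ≤ ‖r‖ ^ 4 / (1 - ‖r‖) := by
  obtain ⟨n, rfl⟩ := Int.le.dest hk
  have hr0' : ‖r‖ ≠ 0 := norm_ne_zero_iff.2 hr0
  have hterm (m : ℕ) : ‖a (l + m) * r ^ (l + (m : ℤ))‖ ≤ ‖r‖ ^ l * ‖r‖ ^ m := by
    rw [norm_mul, norm_zpow, zpow_add₀ hr0', zpow_natCast]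
    exact mul_le_of_le_one_left (by positivity) (ha _)
  have htail := norm_sub_le_of_geometric_bound_of_hasSum hr hterm
    (hsum.comp_add_natCast fun i hi => by simp [hal i hi]) (n + 1)
  rw [sub_zero, ← sum_Icc_add_natCast (fun i => a i * r ^ i)] at htail
  calc ‖scaledPartialSum r a l (l + n)‖
      = ‖r‖ ^ (3 - (l + n)) * ‖∑ i ∈ Icc l (l + n), a i * r ^ i‖ := by
        rw [scaledPartialSum, norm_mul, norm_zpow]
    _ ≤ ‖r‖ ^ (3 - (l + n)) * (‖r‖ ^ l * ‖r‖ ^ (n + 1) / (1 - ‖r‖)) := by gcongr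
    _ = ‖r‖ ^ 4 / (1 - ‖r‖) := by
        rw [← mul_div_assoc, ← mul_assoc, ← zpow_add₀ hr0', ← zpow_natCast, ← zpow_add₀ hr0']
        congr 1
        rw [show 3 - (l + n) + l + ((n + 1 : ℕ) : ℤ) = 4 by push_cast; ring]
        norm_num

theorem tendsto_norm_scaledPartialSum_atTop (hr0 : r ≠ 0) (hr : ‖r‖ < 1)
    (hal : ∀ i < l, a i = 0) {w : 𝕜} (hsum : HasSum (fun i => a i * r ^ i) w) (hw : w ≠ 0) :
    Tendsto (fun n : ℕ => ‖scaledPartialSum r a l (l + n)‖) atTop atTop := by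
  have hr0' : ‖r‖ ≠ 0 := norm_ne_zero_iff.2 hr0
  have hsums : Tendsto (fun n : ℕ => ‖∑ i ∈ Icc l (l + n), a i * r ^ i‖) atTop (𝓝 ‖w‖) := by
    simp_rw [sum_Icc_add_natCast (fun i => a i * r ^ i)]
    exact ((hsum.comp_add_natCast fun i hi => by simp [hal i hi]).tendsto_sum_nat.comp
      (tendsto_add_atTop_nat 1)).norm
  have hpow : Tendsto (fun n : ℕ => ‖r‖ ^ (3 - (l + n))) atTop atTop := by
    have hexp (n : ℕ) : ‖r‖ ^ (3 - (l + n)) = ‖r‖ ^ (3 - l) * ‖r‖⁻¹ ^ n := by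
      rw [inv_pow, ← zpow_natCast, ← zpow_neg, ← zpow_add₀ hr0']
      congr 1
      ring
    simp_rw [hexp]
    exact (tendsto_pow_atTop_atTop_of_one_lt ((one_lt_inv₀ (by positivity)).2 hr)).const_mul_atTop
      (by positivity)
  simp only [scaledPartialSum, norm_mul, norm_zpow]
  exact hpow.atTop_mul_pos (norm_pos_iff.2 hw) hsums

theorem eq_zero_of_norm_scaledPartialSum_le (hr0 : r ≠ 0) (hr : ‖r‖ < 1)
    (hal : ∀ i < l, a i = 0) {w : 𝕜} (hsum : HasSum (fun i => a i * r ^ i) w) {C : ℝ}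
    (hC : ∀ k ≥ l, ‖scaledPartialSum r a l k‖ ≤ C) : w = 0 := by
  by_contra hw
  obtain ⟨n, hn⟩ :=
    ((tendsto_norm_scaledPartialSum_atTop hr0 hr hal hsum hw).eventually_gt_atTop C).exists
  exact (hC _ (by omega)).not_gt hn

end Normed

open Matrix in
theorem finite_setOf_norm_coeffEval_le {n : ℕ} {v : Fin n → ℂ} (hv : Function.Injective v)
    (B : Fin n → ℝ) : {c : Fin n → ℤ | ∀ i, ‖coeffEval (v i) c‖ ≤ B i}.Finite := by
  set V := Matrix.vandermonde v
  have hV : IsUnit V.det := isUnit_iff_ne_zero.2 (Matrix.det_vandermonde_ne_zero_iff.2 hv)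
  set N : Fin n → ℝ := fun j => ∑ i, ‖V⁻¹ j i‖ * B i
  refine (Set.finite_Icc (fun j => -⌈N j⌉) (fun j => ⌈N j⌉)).subset fun c hc => ?_
  have hcoords : (fun j => (c j : ℂ)) = V⁻¹ *ᵥ fun i => coeffEval (v i) c := by
    have : (fun i => coeffEval (v i) c) = V *ᵥ fun j => (c j : ℂ) := by
      ext i
      simp only [coeffEval, Matrix.mulVec, dotProduct, V, Matrix.vandermonde_apply, mul_comm]
    rw [this, Matrix.mulVec_mulVec, Matrix.nonsing_inv_mul _ hV, Matrix.one_mulVec]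
  have habs (j : Fin n) : |(c j : ℝ)| ≤ N j := by
    rw [← Complex.norm_intCast, congrFun hcoords j]
    calc ‖∑ i, V⁻¹ j i * coeffEval (v i) c‖ ≤ ∑ i, ‖V⁻¹ j i‖ * ‖coeffEval (v i) c‖ :=
          (norm_sum_le _ _).trans_eq (by simp only [norm_mul])
      _ ≤ N j := sum_le_sum fun i _ => by gcongr; exact hc i
  refine ⟨fun j => ?_, fun j => ?_⟩
  · exact_mod_cast (abs_le.1 ((habs j).trans (Int.le_ceil _))).1
  · exact_mod_cast (le_abs_self _).trans ((habs j).trans (Int.le_ceil _))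

theorem norm_coeffEval_ofReal {n : ℕ} (r : ℝ) (c : Fin n → ℤ) :
    ‖coeffEval (r : ℂ) c‖ = ‖coeffEval r c‖ := by
  rw [← Complex.ofRealHom_eq_coe, ← map_coeffEval, Complex.ofRealHom_eq_coe, Complex.norm_real]

theorem norm_coeffEval_conj {n : ℕ} (z : ℂ) (c : Fin n → ℤ) :
    ‖coeffEval (starRingEnd ℂ z) c‖ = ‖coeffEval z c‖ := by
  rw [← map_coeffEval, Complex.norm_conj]

theorem injective_ofReal_ofReal_conj {a b : ℝ} {z : ℂ} (hab : a ≠ b) (hz : z.im ≠ 0) :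
    Function.Injective ![(a : ℂ), b, z, starRingEnd ℂ z] := by
  intro i j h
  fin_cases i <;> fin_cases j <;>
    simp only [Fin.zero_eta, Fin.mk_one, Fin.reduceFinMk, Matrix.cons_val, Complex.ext_iff,
      Complex.ofReal_re, Complex.ofReal_im, Complex.conj_re, Complex.conj_im] at h ⊢ <;> grind

section Expansions

def digitDiff (ε ε' : ℤ → ℕ) (i : ℤ) : ℤ := ε i - ε' i

variable {l : ℤ} {ε ε' : ℤ → ℕ}

theorem IsExpansion.cast_digitDiff_eq_zero {K : Type*} [AddGroupWithOne K] (hε : IsExpansion l ε)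
    (hε' : IsExpansion l ε') {i : ℤ} (hi : i < l) : (digitDiff ε ε' i : K) = 0 := by
  simp [digitDiff, hε.2.1 i hi, hε'.2.1 i hi]

theorem IsExpansion.norm_digitDiff_le_one {K : Type*} [RCLike K] (hε : IsExpansion l ε)
    (hε' : IsExpansion l ε') (i : ℤ) : ‖(digitDiff ε ε' i : K)‖ ≤ 1 := by
  have h := hε.1 i
  have h' := hε'.1 i
  rw [← RCLike.ofReal_intCast, RCLike.norm_ofReal, ← Int.cast_abs, ← Int.cast_one, Int.cast_le,
    digitDiff, abs_le]
  omega

theorem Adig_eq (a : ℝ) (b : ℂ) (k : ℤ) :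
    Adig (a, b) l ε ε' k = (scaledPartialSum a (fun i => (digitDiff ε ε' i : ℝ)) l k,
      scaledPartialSum b (fun i => (digitDiff ε ε' i : ℂ)) l k) := by
  simp [Adig, scaledPartialSum, digitDiff, Prod.ext_iff, Prod.fst_sum, Prod.snd_sum]

theorem ExpSum.hasSum_sub {α : ℝ × ℂ} {x y : ℝ × ℂ} (hx : ExpSum α ε x) (hy : ExpSum α ε' y) :
    HasSum (fun i => (digitDiff ε ε' i : ℝ × ℂ) * α ^ i) (x - y) := by
  have hsub : (fun i => (digitDiff ε ε' i : ℝ × ℂ) * α ^ i) =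
      fun i => (ε i : ℝ × ℂ) * α ^ i - (ε' i : ℝ × ℂ) * α ^ i := by
    funext i
    simp [digitDiff, sub_mul]
  exact hsub ▸ hx.sub hy

theorem ExpSum.hasSum_digitDiff {a : ℝ} {b : ℂ} {x y : ℝ × ℂ} (hx : ExpSum (a, b) ε x)
    (hy : ExpSum (a, b) ε' y) :
    HasSum (fun i => (digitDiff ε ε' i : ℝ) * a ^ i) (x - y).1 ∧
      HasSum (fun i => (digitDiff ε ε' i : ℂ) * b ^ i) (x - y).2 := by
  have h := hx.hasSum_sub hy
  exact ⟨by simpa [Function.comp_def] using h.map (RingHom.fst ℝ ℂ) continuous_fst,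
    by simpa [Function.comp_def] using h.map (RingHom.snd ℝ ℂ) continuous_snd⟩

theorem eq_of_finite_setOf_Adig {β₂ : ℝ} {β₃ : ℂ} (hβ₂0 : β₂ ≠ 0) (hβ₂ : ‖β₂‖ < 1)
    (hβ₃0 : β₃ ≠ 0) (hβ₃ : ‖β₃‖ < 1) (hε : IsExpansion l ε) (hε' : IsExpansion l ε')
    {x y : ℝ × ℂ} (hx : ExpSum (β₂, β₃) ε x) (hy : ExpSum (β₂, β₃) ε' y)
    (hfin : {s | ∃ k ≥ l, s = Adig (β₂, β₃) l ε ε' k}.Finite) : x = y := by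
  obtain ⟨C, hC⟩ := hfin.isBounded.exists_norm_le
  obtain ⟨h₂, h₃⟩ := ExpSum.hasSum_digitDiff hx hy
  have hA (k : ℤ) (hk : k ≥ l) := hC _ ⟨k, hk, rfl⟩
  simp only [Adig_eq] at hA
  rw [← sub_eq_zero, Prod.ext_iff]
  exact ⟨eq_zero_of_norm_scaledPartialSum_le hβ₂0 hβ₂ (fun i => hε.cast_digitDiff_eq_zero hε') h₂
      fun k hk => (norm_fst_le _).trans (hA k hk),
    eq_zero_of_norm_scaledPartialSum_le hβ₃0 hβ₃ (fun i => hε.cast_digitDiff_eq_zero hε') h₃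
      fun k hk => (norm_snd_le _).trans (hA k hk)⟩

theorem finite_setOf_Adig_of_eq {β β₂ : ℝ} {β₃ : ℂ} (hβ : 1 < β)
    (hβroot : β ^ 4 = β ^ 3 + β ^ 2 + β + 1) (hβ₂ : ‖β₂‖ < 1)
    (hβ₂root : β₂ ^ 4 = β₂ ^ 3 + β₂ ^ 2 + β₂ + 1) (hβ₃ : ‖β₃‖ < 1) (hβ₃im : β₃.im ≠ 0)
    (hβ₃root : β₃ ^ 4 = β₃ ^ 3 + β₃ ^ 2 + β₃ + 1) (hε : IsExpansion l ε)
    (hε' : IsExpansion l ε') {x : ℝ × ℂ} (hx : ExpSum (β₂, β₃) ε x)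
    (hx' : ExpSum (β₂, β₃) ε' x) : {s | ∃ k ≥ l, s = Adig (β₂, β₃) l ε ε' k}.Finite := by
  have hβ₁ : 1 < ‖β‖ := by rwa [Real.norm_of_nonneg (by linarith)]
  have hdl (K : Type) [AddGroupWithOne K] (i : ℤ) (hi : i < l) : (digitDiff ε ε' i : K) = 0 :=
    hε.cast_digitDiff_eq_zero hε' hi
  obtain ⟨h₂, h₃⟩ := ExpSum.hasSum_digitDiff hx hx'
  simp only [sub_self, Prod.fst_zero, Prod.snd_zero] at h₂ h₃
  have hv := injective_ofReal_ofReal_conj (fun h : β = β₂ => by rw [h] at hβ₁; linarith) hβ₃im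
  refine ((finite_setOf_norm_coeffEval_le hv ![‖β‖ ^ 4 / (‖β‖ - 1), ‖β₂‖ ^ 4 / (1 - ‖β₂‖),
    ‖β₃‖ ^ 4 / (1 - ‖β₃‖), ‖β₃‖ ^ 4 / (1 - ‖β₃‖)]).image
    fun c => (coeffEval β₂ c, coeffEval β₃ c)).subset ?_
  rintro _ ⟨k, hk, rfl⟩
  obtain ⟨c, hc⟩ := exists_coeffEval_eq_scaledPartialSum (digitDiff ε ε') l k
  refine ⟨c, fun i => ?_, by rw [Adig_eq, hc ℝ β₂ hβ₂root, hc ℂ β₃ hβ₃root]⟩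
  fin_cases i <;> simp only [Fin.zero_eta, Fin.mk_one, Fin.reduceFinMk, Matrix.cons_val]
  · rw [norm_coeffEval_ofReal, ← hc ℝ β hβroot]
    exact norm_scaledPartialSum_le_of_one_lt hβ₁ (hε.norm_digitDiff_le_one hε') k
  · rw [norm_coeffEval_ofReal, ← hc ℝ β₂ hβ₂root]
    exact norm_scaledPartialSum_le_of_hasSum_zero (ne_zero_of_root hβ₂root) hβ₂
      (hε.norm_digitDiff_le_one hε') (hdl ℝ) h₂ hk
  · rw [← hc ℂ β₃ hβ₃root]
    exact norm_scaledPartialSum_le_of_hasSum_zero (ne_zero_of_root hβ₃root) hβ₃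
      (hε.norm_digitDiff_le_one hε') (hdl ℂ) h₃ hk
  · rw [norm_coeffEval_conj, ← hc ℂ β₃ hβ₃root]
    exact norm_scaledPartialSum_le_of_hasSum_zero (ne_zero_of_root hβ₃root) hβ₃
      (hε.norm_digitDiff_le_one hε') (hdl ℂ) h₃ hk

end Expansions

theorem eq_iff_Sset_finite (β β₂ : ℝ) (β₃ : ℂ)
    (hβ : 1 < β) (hβroot : β ^ 4 = β ^ 3 + β ^ 2 + β + 1)
    (hβ₂neg : -1 < β₂) (hβ₂pos : β₂ < 0)
    (hβ₂root : β₂ ^ 4 = β₂ ^ 3 + β₂ ^ 2 + β₂ + 1)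
    (hβ₃abs : ‖β₃‖ < 1) (hβ₃im : β₃.im ≠ 0)
    (hβ₃root : β₃ ^ 4 = β₃ ^ 3 + β₃ ^ 2 + β₃ + 1)
    (α : ℝ × ℂ) (hα : α = (β₂, β₃))
    (l : ℤ) (ε ε' : ℤ → ℕ) (hε : IsExpansion l ε) (hε' : IsExpansion l ε')
    (x y : ℝ × ℂ) (hx : ExpSum α ε x) (hy : ExpSum α ε' y) :
    x = y ↔ Set.Finite { s | ∃ k ≥ l, s = Adig α l ε ε' k } := by
  subst hα
  have hβ₂abs : ‖β₂‖ < 1 := by rw [Real.norm_eq_abs, abs_lt]; constructor <;> linarith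
  constructor
  · rintro rfl
    exact finite_setOf_Adig_of_eq hβ hβroot hβ₂abs hβ₂root hβ₃abs hβ₃im hβ₃root hε hε' hx hy
  · exact eq_of_finite_setOf_Adig (ne_zero_of_root hβ₂root) hβ₂abs (ne_zero_of_root hβ₃root)
      hβ₃abs hε hε' hx hy
end
end

section
/- The set ℰ(1+α²) = ℰ ∩ (ℰ + 1 + α²) is the singleton { α⁴/(1-α²) }, where the division is componentwise in ℝ×ℂ. -/
/-!
For `x ∈ (-1, 0)` and digits `ε_i ∈ {0, 1}` supported on `i ≥ 4`, the term `ε_i xⁱ` lies between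
`0` and `xⁱ`, where `xⁱ > 0` exactly for even `i`. Hence
`Σ ε_i xⁱ ∈ [x⁵/(1-x²), x⁴/(1-x²)]`, and the upper end is reached only by the digits `1` at the
even indices. When `x` is a root of `P`, `x⁴ - x⁵ = (1 - x²)(1 + x²)`, so this interval has length
exactly `1 + x²`. Applied to the real coordinate `β₂` of `α`: if `z` and `z - (1 + α²)` both lie in
`ℰ`, the real coordinate of `z` is the maximum, which pins down the digits of `z` and thus
`z = α⁴/(1-α²)`. Conversely `α⁴/(1-α²) - (1 + α²) = α⁵/(1-α²)` is the sum over the odd indices.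
-/

open MeasureTheory

noncomputable section

/-- `ℰ(u) = ℰ ∩ (ℰ + u)`. -/
def Eset (α u : ℝ × ℂ) : Set (ℝ × ℂ) :=
  RauzyE α ∩ ((fun z => z + u) '' RauzyE α)

def everyOther (k : ℕ) (i : ℤ) : ℕ := if (k : ℤ) ≤ i ∧ Even (i - k) then 1 else 0

lemma everyOther_of_lt {k : ℕ} {i : ℤ} (h : i < k) : everyOther k i = 0 :=
  if_neg fun h' => by omega

lemma everyOther_four {i : ℤ} (hi : 4 ≤ i) : everyOther 4 i = if Even i then 1 else 0 := by
  unfold everyOther; simp only [Int.even_iff]; split_ifs <;> omega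

lemma everyOther_five {i : ℤ} (hi : 4 ≤ i) : everyOther 5 i = if Even i then 0 else 1 := by
  unfold everyOther; simp only [Int.even_iff]; split_ifs <;> omega

lemma isExpansion_everyOther {l : ℤ} {k : ℕ} (h : l ≤ k) : IsExpansion l (everyOther k) := by
  refine ⟨fun i => by unfold everyOther; split_ifs <;> omega,
    fun i hi => everyOther_of_lt (by omega), ?_⟩
  rintro i ⟨h0, h1, -⟩
  unfold everyOther at h0 h1
  split_ifs at h0 h1 with h0' h1'
  rw [Int.even_iff] at h0' h1'
  omega

theorem hasSum_everyOther_mul_zpow {K : Type*} [NormedField K] [CompleteSpace K] {y : K}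
    (hy : ‖y‖ < 1) (k : ℕ) :
    HasSum (fun i : ℤ => (everyOther k i : K) * y ^ i) (y ^ k / (1 - y ^ 2)) := by
  have hinj : Function.Injective fun n : ℕ => (k + 2 * n : ℤ) := fun a b h => by
    simp only at h; omega
  refine (hinj.hasSum_iff fun i hi => ?_).mp ?_
  · rw [everyOther, if_neg, Nat.cast_zero, zero_mul]
    rintro ⟨hk, m, hm⟩
    exact hi ⟨(i - k).toNat / 2, by simp only; omega⟩
  · have hy2 : ‖y ^ 2‖ < 1 := by rw [norm_pow]; nlinarith [norm_nonneg y]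
    rw [div_eq_mul_inv]
    refine ((hasSum_geometric_of_norm_lt_one hy2).mul_left (y ^ k)).congr_fun fun n => ?_
    have : everyOther k (k + 2 * n) = 1 := if_pos ⟨by omega, by simp⟩
    have hcast : (k + 2 * n : ℤ) = ((k + 2 * n : ℕ) : ℤ) := by push_cast; ring
    rw [Function.comp_apply, this, Nat.cast_one, one_mul, hcast, zpow_natCast, pow_add, pow_mul]

section NegativeBase

variable {x : ℝ} {ε : ℤ → ℕ}

lemma digit_mul_zpow_lt (hx : x < 0) (hε : IsExpansion 4 ε) {i : ℤ} (h : ε i ≠ everyOther 4 i) :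
    (ε i : ℝ) * x ^ i < everyOther 4 i * x ^ i := by
  have hi : 4 ≤ i := by
    by_contra! hi
    exact h (by rw [hε.2.1 i hi, everyOther_of_lt (by omega)])
  have := hε.1 i
  rw [everyOther_four hi] at h ⊢
  split_ifs at h ⊢ with he
  · rw [show ε i = 0 by omega]
    simpa using he.zpow_pos hx.ne
  · rw [show ε i = 1 by omega]
    simpa using (Int.not_even_iff_odd.mp he).zpow_neg hx

lemma digit_mul_zpow_le (hx : x < 0) (hε : IsExpansion 4 ε) (i : ℤ) :
    (ε i : ℝ) * x ^ i ≤ everyOther 4 i * x ^ i := by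
  by_cases h : ε i = everyOther 4 i
  · rw [h]
  · exact (digit_mul_zpow_lt hx hε h).le

lemma everyOther_five_mul_zpow_le (hx : x < 0) (hε : IsExpansion 4 ε) (i : ℤ) :
    (everyOther 5 i : ℝ) * x ^ i ≤ ε i * x ^ i := by
  by_cases hi : 4 ≤ i
  · have : (ε i : ℝ) ≤ 1 := by exact_mod_cast hε.1 i
    rw [everyOther_five hi]
    split_ifs with he
    · simpa using mul_nonneg (Nat.cast_nonneg (ε i)) (he.zpow_pos hx.ne).le
    · have := (Int.not_even_iff_odd.mp he).zpow_neg hx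
      simp only [Nat.cast_one, one_mul]
      nlinarith
  · rw [hε.2.1 i (by omega), everyOther_of_lt (by omega)]

theorem le_of_hasSum_digit_mul_zpow (hx₁ : -1 < x) (hx₀ : x < 0) (hε : IsExpansion 4 ε) {s : ℝ}
    (hs : HasSum (fun i => (ε i : ℝ) * x ^ i) s) : x ^ 5 / (1 - x ^ 2) ≤ s := by
  have hx : ‖x‖ < 1 := by rw [Real.norm_eq_abs, abs_lt]; constructor <;> linarith
  exact hasSum_le (everyOther_five_mul_zpow_le hx₀ hε) (hasSum_everyOther_mul_zpow hx 5) hs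

theorem eq_everyOther_four_of_le (hx₁ : -1 < x) (hx₀ : x < 0) (hε : IsExpansion 4 ε) {s : ℝ}
    (hs : HasSum (fun i => (ε i : ℝ) * x ^ i) s) (hle : x ^ 4 / (1 - x ^ 2) ≤ s) :
    ε = everyOther 4 := by
  have hx : ‖x‖ < 1 := by rw [Real.norm_eq_abs, abs_lt]; constructor <;> linarith
  by_contra hne
  obtain ⟨i, hi⟩ := Function.ne_iff.mp hne
  exact hle.not_gt <| hasSum_lt (digit_mul_zpow_le hx₀ hε) (digit_mul_zpow_lt hx₀ hε hi) hs
    (hasSum_everyOther_mul_zpow hx 4)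

end NegativeBase

lemma ExpSum.fst {α : ℝ × ℂ} {ε : ℤ → ℕ} {z : ℝ × ℂ} (h : ExpSum α ε z) :
    HasSum (fun i => (ε i : ℝ) * α.1 ^ i) z.1 := by
  exact (h.map (AddMonoidHom.fst ℝ ℂ) continuous_fst).congr_fun fun i => by simp

lemma expSum_everyOther {α : ℝ × ℂ} (hα : ‖α‖ < 1) (k : ℕ) :
    ExpSum α (everyOther k) (α ^ k / (1 - α ^ 2)) := by
  have h₁ := hasSum_everyOther_mul_zpow ((norm_fst_le α).trans_lt hα) k
  have h₂ := hasSum_everyOther_mul_zpow ((norm_snd_le α).trans_lt hα) k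
  exact h₁.prodMk h₂

lemma pow_five_div_add_one_add_sq {K : Type*} [Field K] {y : K}
    (hy : y ^ 4 = y ^ 3 + y ^ 2 + y + 1) (h : 1 - y ^ 2 ≠ 0) :
    y ^ 5 / (1 - y ^ 2) + (1 + y ^ 2) = y ^ 4 / (1 - y ^ 2) := by
  field_simp
  linear_combination (y - 1) * hy

lemma one_sub_sq_ne_zero_of_norm_lt_one {K : Type*} [NormedField K] {y : K} (hy : ‖y‖ < 1) :
    1 - y ^ 2 ≠ 0 := by
  rw [sub_ne_zero]
  intro h
  have : ‖y‖ ^ 2 = 1 := by rw [← norm_pow, ← h, norm_one]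
  nlinarith [norm_nonneg y]

theorem Eset_one_add_alpha_sq_general (β₂ : ℝ) (β₃ : ℂ)
    (hβ₂neg : -1 < β₂) (hβ₂pos : β₂ < 0)
    (hβ₂root : β₂ ^ 4 = β₂ ^ 3 + β₂ ^ 2 + β₂ + 1)
    (hβ₃abs : ‖β₃‖ < 1)
    (hβ₃root : β₃ ^ 4 = β₃ ^ 3 + β₃ ^ 2 + β₃ + 1)
    (α : ℝ × ℂ) (hα : α = (β₂, β₃)) :
    Eset α (1 + α ^ 2) = {α ^ 4 / (1 - α ^ 2)} := by
  subst hα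
  have hβ₂abs : ‖β₂‖ < 1 := by rw [Real.norm_eq_abs, abs_lt]; constructor <;> linarith
  have hαabs : ‖(β₂, β₃)‖ < 1 := by rw [Prod.norm_mk]; exact max_lt hβ₂abs hβ₃abs
  have hgap₂ := pow_five_div_add_one_add_sq hβ₂root (one_sub_sq_ne_zero_of_norm_lt_one hβ₂abs)
  have hgap₃ := pow_five_div_add_one_add_sq hβ₃root (one_sub_sq_ne_zero_of_norm_lt_one hβ₃abs)
  ext z
  constructor
  · rintro ⟨⟨ε, hε, hz⟩, w, ⟨δ, hδ, hw⟩, rfl⟩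
    have hw₁ := le_of_hasSum_digit_mul_zpow hβ₂neg hβ₂pos hδ hw.fst
    obtain rfl : ε = everyOther 4 :=
      eq_everyOther_four_of_le hβ₂neg hβ₂pos hε hz.fst (by simp only [Prod.fst_add, Prod.fst_one, Prod.pow_fst]; linarith)
    exact hz.unique (expSum_everyOther hαabs 4)
  · rintro rfl
    exact ⟨⟨everyOther 4, isExpansion_everyOther le_rfl, expSum_everyOther hαabs 4⟩,
      _, ⟨everyOther 5, isExpansion_everyOther (by norm_num), expSum_everyOther hαabs 5⟩,
      Prod.ext hgap₂ hgap₃⟩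

theorem Eset_one_add_alpha_sq (β β₂ : ℝ) (β₃ : ℂ)
    (hβ : 1 < β) (hβroot : β ^ 4 = β ^ 3 + β ^ 2 + β + 1)
    (hβ₂neg : -1 < β₂) (hβ₂pos : β₂ < 0)
    (hβ₂root : β₂ ^ 4 = β₂ ^ 3 + β₂ ^ 2 + β₂ + 1)
    (hβ₃abs : ‖β₃‖ < 1) (hβ₃im : β₃.im ≠ 0)
    (hβ₃root : β₃ ^ 4 = β₃ ^ 3 + β₃ ^ 2 + β₃ + 1)
    (α : ℝ × ℂ) (hα : α = (β₂, β₃)) :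
    Eset α (1 + α ^ 2) = {α ^ 4 / (1 - α ^ 2)} :=
  Eset_one_add_alpha_sq_general β₂ β₃ hβ₂neg hβ₂pos hβ₂root hβ₃abs hβ₃root α hα
end
end

section
/- The set ℰ(α⁻²+α⁻¹+α) = ℰ ∩ (ℰ + α⁻² + α⁻¹ + α) is the singleton { (α⁵+α⁶)/(1-α⁴) }, where the division is componentwise in ℝ×ℂ. -/
open MeasureTheory

noncomputable section

/-!
The point `p = (α⁵ + α⁶)/(1 - α⁴)` has the 4-periodic expansion with digits `1` exactly
at `i ≡ 1, 2 (mod 4)`, and `p - u` (for `u = α⁻² + α⁻¹ + α`) the one with digits at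
`i ≡ 0, 3`; so `p ∈ ℰ(u)`.

Conversely, let `z ∈ ℰ(u)` with expansions `ε` of `z` and `δ` of `z - u`. Only the complex
coordinate `θ = β₃` is needed: the digits `dₖ = ε_{k+4} - δ_{k+4} ∈ {-1, 0, 1}` satisfy
`∑ dₖ θ^(k+1) = θ⁻³ u`. Reading them off one at a time, the rescaled remainder runs through
a 4-periodic cycle of values, and a wrong digit would leave a remainder `v` with
`|v|² ≥ 7.52`, whereas every series `∑ cₖ θ^(k+2)` with `|cₖ| ≤ 1` has squared modulus
below `7.52`. Hence `d` is forced, which forces `ε`, and `z = p`. The inequalities use a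
numerical enclosure of `θ` obtained from its minimal polynomial.
-/

theorem hasSum_ite_emod_eq {𝕜 : Type*} [NormedField 𝕜] {γ : 𝕜} (hγ : ‖γ‖ < 1) {p : ℕ}
    (hp : 0 < p) (m : ℕ) :
    HasSum (fun i : ℤ => if (m : ℤ) ≤ i ∧ i % p = m % p then γ ^ i else 0)
      (γ ^ m / (1 - γ ^ p)) := by
  have hγp : ‖γ ^ p‖ < 1 := by
    rw [norm_pow]; exact pow_lt_one₀ (norm_nonneg γ) hγ hp.ne'
  have hinj : Function.Injective (fun k : ℕ => ((m + p * k : ℕ) : ℤ)) := by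
    intro a b hab; simp only [Nat.cast_inj, add_right_inj, mul_eq_mul_left_iff] at hab; omega
  rw [← hinj.hasSum_iff, div_eq_mul_inv]
  · refine ((hasSum_geometric_of_norm_lt_one hγp).mul_left (γ ^ m)).congr_fun fun k => ?_
    have hmod : ((m + p * k : ℕ) : ℤ) % p = m % p := by push_cast; simp
    simp only [Function.comp_apply]
    rw [if_pos ⟨by omega, hmod⟩, zpow_natCast, pow_add, pow_mul]
  · intro i hi
    refine if_neg fun ⟨hmi, hmod⟩ => ?_
    obtain ⟨q, hq⟩ := Int.ModEq.dvd hmod.symm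
    have hq0 : 0 ≤ q :=
      nonneg_of_mul_nonneg_right (by omega : (0 : ℤ) ≤ p * q) (by exact_mod_cast hp)
    exact hi ⟨q.toNat, by push_cast [Int.toNat_of_nonneg hq0]; linarith⟩

def periodicDigits (r s : ℕ) (i : ℤ) : ℕ :=
  if 4 ≤ i ∧ (i % 4 = r ∨ i % 4 = s) then 1 else 0

theorem isExpansion_periodicDigits (r s : ℕ) : IsExpansion 4 (periodicDigits r s) := by
  refine ⟨fun i => ?_, fun i hi => if_neg (by omega), fun i => ?_⟩
  · unfold periodicDigits; split_ifs <;> omega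
  · unfold periodicDigits
    split_ifs <;> simp
    omega

theorem hasSum_periodicDigits {𝕜 : Type*} [NormedField 𝕜] {γ : 𝕜} (hγ : ‖γ‖ < 1)
    {r s : ℕ} (hr : r < 4) (hs : s < 4) (hrs : r ≠ s) :
    HasSum (fun i : ℤ => (periodicDigits r s i : 𝕜) * γ ^ i)
      ((γ ^ (4 + r) + γ ^ (4 + s)) / (1 - γ ^ 4)) := by
  rw [add_div]
  refine ((hasSum_ite_emod_eq hγ four_pos (4 + r)).add
    (hasSum_ite_emod_eq hγ four_pos (4 + s))).congr_fun fun i => ?_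
  unfold periodicDigits
  push_cast
  split_ifs <;> first | omega | simp

theorem expSum_mk_iff {a : ℝ} {b : ℂ} {ε : ℤ → ℕ} {z : ℝ × ℂ} :
    ExpSum (a, b) ε z ↔
      HasSum (fun i => (ε i : ℝ) * a ^ i) z.1 ∧ HasSum (fun i => (ε i : ℂ) * b ^ i) z.2 :=
  ⟨fun h => ⟨h.map (AddMonoidHom.fst ℝ ℂ) continuous_fst,
    h.map (AddMonoidHom.snd ℝ ℂ) continuous_snd⟩, fun h => h.1.prodMk h.2⟩

theorem expSum_periodicDigits {a : ℝ} {b : ℂ} (ha : ‖a‖ < 1) (hb : ‖b‖ < 1) {r s : ℕ}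
    (hr : r < 4) (hs : s < 4) (hrs : r ≠ s) :
    ExpSum (a, b) (periodicDigits r s)
      ((((a, b) : ℝ × ℂ) ^ (4 + r) + (a, b) ^ (4 + s)) / (1 - (a, b) ^ 4)) :=
  expSum_mk_iff.2 ⟨hasSum_periodicDigits ha hr hs hrs, hasSum_periodicDigits hb hr hs hrs⟩

theorem one_sub_pow_ne_zero_of_norm_lt_one {𝕜 : Type*} [NormedDivisionRing 𝕜] {γ : 𝕜}
    (hγ : ‖γ‖ < 1) {n : ℕ} (hn : n ≠ 0) : 1 - γ ^ n ≠ 0 := by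
  intro h
  have h1 : ‖γ ^ n‖ < 1 := by rw [norm_pow]; exact pow_lt_one₀ (norm_nonneg γ) hγ hn
  rw [← sub_eq_zero.mp h, norm_one] at h1
  exact lt_irrefl 1 h1

theorem periodic_sum_add_shift {K : Type*} [Field K] {γ : K} (h0 : γ ≠ 0)
    (h4 : 1 - γ ^ 4 ≠ 0) (hroot : γ ^ 4 = γ ^ 3 + γ ^ 2 + γ + 1) :
    (γ ^ (4 + 0) + γ ^ (4 + 3)) / (1 - γ ^ 4) + (γ ^ (-2 : ℤ) + γ⁻¹ + γ) =
      (γ ^ (4 + 1) + γ ^ (4 + 2)) / (1 - γ ^ 4) := by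
  rw [zpow_neg, zpow_ofNat]
  field_simp
  linear_combination (γ ^ 5 + γ ^ 2 - γ ^ 3 - 1) * hroot

theorem hasSum_nat_add_iff_of_eq_zero {M : Type*} [AddCommMonoid M] [TopologicalSpace M]
    {f : ℤ → M} {l : ℤ} (hf : ∀ i < l, f i = 0) {a : M} :
    HasSum (fun k : ℕ => f (l + k)) a ↔ HasSum f a :=
  Function.Injective.hasSum_iff (f := f) (g := fun k : ℕ => l + k)
    (fun a b hab => by simpa using hab)
    (fun i hi => hf i (by_contra fun h => hi ⟨(i - l).toNat, by simp; omega⟩))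

theorem norm_le_of_hasSum_of_pair_le {𝕜 : Type*} [NormedField 𝕜] [CompleteSpace 𝕜] {θ : 𝕜}
    (hθ : ‖θ‖ < 1) {c : ℕ → 𝕜} {M : ℝ} (hc : ∀ k, ‖c (2 * k) + c (2 * k + 1) * θ‖ ≤ M)
    {W : 𝕜} (hW : HasSum (fun k => c k * θ ^ k) W) : ‖W‖ ≤ M / (1 - ‖θ‖ ^ 2) := by
  set f := fun k => c k * θ ^ k
  have hr : ‖θ‖ ^ 2 < 1 := pow_lt_one₀ (norm_nonneg θ) hθ two_ne_zero
  have heven := (hW.summable.comp_injective (mul_right_injective₀ two_ne_zero)).hasSum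
  have hodd := (hW.summable.comp_injective
    ((add_left_injective 1).comp (mul_right_injective₀ two_ne_zero))).hasSum
  have hpairs : HasSum (fun k => f (2 * k) + f (2 * k + 1)) W := by
    rw [hW.unique (heven.even_add_odd hodd)]
    exact heven.add hodd
  refine hpairs.norm_le_of_bounded ((hasSum_geometric_of_lt_one (by positivity) hr).mul_left M)
    fun k => ?_
  have hpair : f (2 * k) + f (2 * k + 1) = (c (2 * k) + c (2 * k + 1) * θ) * (θ ^ 2) ^ k := by
    simp only [f]; ring
  rw [hpair, norm_mul, norm_pow, norm_pow]
  exact mul_le_mul_of_nonneg_right (hc k) (by positivity)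

open Complex

/-- A box around the non-real root `θ ≈ -0.0763789 + 0.8147036 i` of `x⁴ - x³ - x² - x - 1`. -/
def IsNearRoot (θ : ℂ) : Prop :=
  θ.re ∈ Set.Icc (-0.07638) (-0.076378) ∧ θ.im ^ 2 ∈ Set.Icc 0.663737 0.663747

/-- Eliminating `(Im θ)²` from the real and imaginary parts of `θ⁴ = θ³ + θ² + θ + 1` gives
this sextic in `s = Re θ`; its other real root, `≈ 0.5763`, is excluded by `s ≤ 1/4`. -/
theorem mem_Icc_of_sextic_eq_zero {s : ℝ} (h1 : -1 < s) (h2 : s ≤ 0.25)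
    (hR : -64 * s ^ 6 + 96 * s ^ 5 - 16 * s ^ 4 - 24 * s ^ 3 - 16 * s ^ 2 + 12 * s + 1 = 0) :
    s ∈ Set.Icc (-0.07638) (-0.076378) := by
  constructor
  · by_contra! hc
    nlinarith [sq_nonneg (s + 1), sq_nonneg (s + 0.5), sq_nonneg (s + 0.25), sq_nonneg s,
      sq_nonneg (s - 0.25),
      mul_pos (by linarith : (0:ℝ) < s + 1) (by linarith : (0:ℝ) < -0.07638 - s),
      sq_nonneg (s * s), sq_nonneg (s * s * s)]
  · by_contra! hc
    nlinarith [sq_nonneg (s + 1), sq_nonneg (s + 0.5), sq_nonneg (s + 0.25), sq_nonneg s,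
      sq_nonneg (s - 0.25),
      mul_nonneg (by linarith : (0:ℝ) ≤ s + 0.076378) (by linarith : (0:ℝ) ≤ 0.25 - s),
      sq_nonneg (s * s), sq_nonneg (s * s * s), sq_nonneg (s * (s + 0.076378)),
      sq_nonneg (s * s + 0.076378 * s)]

theorem isNearRoot_of_root {θ : ℂ} (habs : ‖θ‖ < 1) (him : θ.im ≠ 0)
    (hroot : θ ^ 4 = θ ^ 3 + θ ^ 2 + θ + 1) : IsNearRoot θ := by
  set s := θ.re
  set w := θ.im ^ 2
  have hre := congrArg re hroot
  have him_eq := congrArg im hroot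
  simp only [pow_succ, pow_zero, one_mul, mul_re, mul_im, add_re, add_im, one_re, one_im]
    at hre him_eq
  have hre' : s ^ 4 - 6 * s ^ 2 * w + w ^ 2 = s ^ 3 - 3 * s * w + s ^ 2 - w + s + 1 := by
    linear_combination hre
  have him' : w * (1 - 4 * s) = 1 + 2 * s + 3 * s ^ 2 - 4 * s ^ 3 := by
    refine mul_left_cancel₀ him ?_
    linear_combination him_eq
  have hw0 : 0 < w := by positivity
  have hnorm : s ^ 2 + w < 1 := by
    have h := Complex.sq_norm θ
    rw [normSq_apply] at h
    nlinarith [norm_nonneg θ]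
  have hs1 : -1 < s := by nlinarith
  have hR :
      -64 * s ^ 6 + 96 * s ^ 5 - 16 * s ^ 4 - 24 * s ^ 3 - 16 * s ^ 2 + 12 * s + 1 = 0 := by
    linear_combination (1 - 4 * s) ^ 2 * hre' -
      ((-6 * s ^ 2 + 3 * s + 1) * (1 - 4 * s) + (1 + 2 * s + 3 * s ^ 2 - 4 * s ^ 3) +
        w * (1 - 4 * s)) * him'
  have hs_le : s ≤ 0.25 := by
    by_contra! hc
    nlinarith [mul_pos hw0 (by linarith : (0:ℝ) < 4 * s - 1)]
  have hs := mem_Icc_of_sextic_eq_zero hs1 hs_le hR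
  exact ⟨hs, by constructor <;> nlinarith [hs.1, hs.2]⟩

theorem normSq_cubic (θ : ℂ) (a b c d : ℝ) :
    normSq (a + b * θ + c * θ ^ 2 + d * θ ^ 3) =
      (a + b * θ.re + c * (θ.re ^ 2 - θ.im ^ 2) + d * (θ.re ^ 3 - 3 * θ.re * θ.im ^ 2)) ^ 2 +
        θ.im ^ 2 * (b + 2 * c * θ.re + d * (3 * θ.re ^ 2 - θ.im ^ 2)) ^ 2 := by
  simp only [normSq_apply, pow_succ, pow_zero, one_mul, mul_re, mul_im, add_re, add_im,
    ofReal_re, ofReal_im]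
  ring

def signPattern (n : ℕ) : ℤ :=
  if n % 4 = 1 ∨ n % 4 = 2 then 1 else -1

/-- The value of `∑ₖ d_{n+k} θ^(k+1)` when `∑ₖ dₖ θ^(k+1) = digitRemainder θ 0` and
`d₀, …, d_{n-1}` follow `signPattern`. -/
def digitRemainder (θ : ℂ) (n : ℕ) : ℂ :=
  if n % 4 = 0 then -1 - 3 * θ + θ ^ 3
  else if n % 4 = 1 then -1 + θ + 2 * θ ^ 2 - θ ^ 3
  else if n % 4 = 2 then -(-1 - 3 * θ + θ ^ 3)
  else -(-1 + θ + 2 * θ ^ 2 - θ ^ 3)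

theorem digitRemainder_sub_signPattern {θ : ℂ} (hroot : θ ^ 4 = θ ^ 3 + θ ^ 2 + θ + 1)
    (n : ℕ) :
    digitRemainder θ n - signPattern n * θ = θ * digitRemainder θ (n + 1) := by
  have h := Nat.mod_lt n four_pos
  have h1 : (n + 1) % 4 = (n % 4 + 1) % 4 := Nat.add_mod _ _ _
  interval_cases hn : n % 4 <;> simp [digitRemainder, signPattern, hn, h1] <;>
    first | linear_combination hroot | linear_combination -hroot

namespace IsNearRoot

variable {θ : ℂ} (hθ : IsNearRoot θ)
include hθ

theorem normSq_le : normSq θ ≤ 0.669581 := by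
  obtain ⟨⟨hs1, hs2⟩, -, hw⟩ := hθ
  rw [normSq_apply]
  nlinarith

theorem norm_lt_one : ‖θ‖ < 1 := by
  have := hθ.normSq_le
  rw [← Complex.sq_norm] at this
  nlinarith [norm_nonneg θ]

theorem ne_zero : θ ≠ 0 := by
  rintro rfl
  have := hθ.2.1
  norm_num at this

theorem norm_intCast_add_mul_le {a b : ℤ} (ha : |a| ≤ 1) (hb : |b| ≤ 1) :
    ‖(a : ℂ) + b * θ‖ ≤ 1.35 := by
  have hN := hθ.normSq_le
  have hs : -0.07638 ≤ θ.re ∧ θ.re ≤ 0 := ⟨hθ.1.1, by linarith [hθ.1.2]⟩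
  have hab : |(a * b : ℝ)| ≤ 1 := by
    exact_mod_cast (abs_mul a b).trans_le (mul_le_one₀ ha (abs_nonneg b) hb)
  have ha2 : (a : ℝ) ^ 2 ≤ 1 := sq_le_one_iff_abs_le_one _ |>.2 (by exact_mod_cast ha)
  have hb2 : (b : ℝ) ^ 2 ≤ 1 := sq_le_one_iff_abs_le_one _ |>.2 (by exact_mod_cast hb)
  have hsq : normSq ((a : ℂ) + b * θ) = a ^ 2 + 2 * (a * b) * θ.re + b ^ 2 * normSq θ := by
    simp only [normSq_apply, add_re, add_im, mul_re, mul_im, intCast_re, intCast_im]; ring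
  have : normSq ((a : ℂ) + b * θ) ≤ 1.35 ^ 2 := by
    rw [hsq]
    nlinarith [abs_le.1 hab, normSq_nonneg θ]
  rw [← Complex.sq_norm] at this
  nlinarith [norm_nonneg ((a : ℂ) + b * θ)]

-- Pairing consecutive terms is essential: the termwise bound `‖θ‖² / (1 - ‖θ‖) ≈ 3.7` exceeds
-- `√7.52 ≈ 2.742`, while `1.35 ‖θ‖² / (1 - ‖θ‖²) ≈ 2.736` does not.
theorem normSq_lt_of_hasSum {c : ℕ → ℤ} (hc : ∀ k, |c k| ≤ 1) {V : ℂ}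
    (hV : HasSum (fun k => (c k : ℂ) * θ ^ (k + 2)) V) : normSq V < 7.52 := by
  have hθ2 : θ ^ 2 ≠ 0 := pow_ne_zero 2 hθ.ne_zero
  have hW : HasSum (fun k => (c k : ℂ) * θ ^ k) (V / θ ^ 2) :=
    (hV.div_const _).congr_fun fun k => by
      rw [pow_add, ← mul_assoc, mul_div_cancel_right₀ _ hθ2]
  have hbound := norm_le_of_hasSum_of_pair_le hθ.norm_lt_one
    (fun k => hθ.norm_intCast_add_mul_le (hc (2 * k)) (hc (2 * k + 1))) hW
  have hN := hθ.normSq_le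
  rw [Complex.sq_norm, le_div_iff₀ (by linarith)] at hbound
  have hW4 : ‖V / θ ^ 2‖ ≤ 4.0858 := by nlinarith [norm_nonneg (V / θ ^ 2)]
  have hnorm : ‖V‖ ≤ 0.669581 * 4.0858 := by
    rw [← div_mul_cancel₀ V hθ2, norm_mul, norm_pow, Complex.sq_norm, mul_comm]
    exact mul_le_mul hN hW4 (norm_nonneg _) (by norm_num)
  rw [← Complex.sq_norm]
  nlinarith [norm_nonneg V]

theorem le_normSq_cubic {v : ℂ} {a b c d : ℝ} (hv : v = a + b * θ + c * θ ^ 2 + d * θ ^ 3)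
    {X Y : ℝ} (hX0 : 0 ≤ X) (hY0 : 0 ≤ Y)
    (hX : X ≤ |a + b * θ.re + c * (θ.re ^ 2 - θ.im ^ 2) + d * (θ.re ^ 3 - 3 * θ.re * θ.im ^ 2)|)
    (hY : Y ≤ |b + 2 * c * θ.re + d * (3 * θ.re ^ 2 - θ.im ^ 2)|) :
    X ^ 2 + 0.663737 * Y ^ 2 ≤ normSq v := by
  rw [hv, normSq_cubic]
  exact add_le_add ((pow_le_pow_left₀ hX0 hX 2).trans (sq_abs _).le)
    (mul_le_mul hθ.2.1 ((pow_le_pow_left₀ hY0 hY 2).trans (sq_abs _).le) (sq_nonneg Y)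
      (sq_nonneg _))

theorem monomial_bounds :
    θ.re ^ 2 ∈ Set.Icc 0.005833 0.005834 ∧ θ.re ^ 3 ∈ Set.Icc (-0.0004457) (-0.0004455) ∧
      θ.re * θ.im ^ 2 ∈ Set.Icc (-0.05070) (-0.05069) := by
  obtain ⟨⟨hs1, hs2⟩, hw1, hw2⟩ := hθ
  have h2 : θ.re ^ 2 ∈ Set.Icc 0.005833 0.005834 := by constructor <;> nlinarith
  refine ⟨h2, ⟨?_, ?_⟩, ?_, ?_⟩ <;> nlinarith [h2.1, h2.2]

theorem le_normSq_digitRemainder_zero : 7.52 ≤ normSq (digitRemainder θ 0) := by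
  obtain ⟨⟨h2, h2'⟩, ⟨h3, h3'⟩, h4, h4'⟩ := hθ.monomial_bounds
  refine le_trans (by norm_num) (hθ.le_normSq_cubic (a := -1) (b := -3) (c := 0) (d := 1)
    (by norm_num [digitRemainder]; ring) (X := 0.6) (Y := 3.6) (by norm_num) (by norm_num)
    (le_abs.2 (Or.inr (by linarith [hθ.1.1, hθ.1.2])))
    (le_abs.2 (Or.inr (by linarith [hθ.2.1, hθ.2.2]))))

theorem le_normSq_digitRemainder_zero_sub : 7.52 ≤ normSq (digitRemainder θ 0 - θ) := by
  obtain ⟨⟨h2, h2'⟩, ⟨h3, h3'⟩, h4, h4'⟩ := hθ.monomial_bounds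
  refine le_trans (by norm_num) (hθ.le_normSq_cubic (a := -1) (b := -4) (c := 0) (d := 1)
    (by norm_num [digitRemainder]; ring) (X := 0.5) (Y := 4.6) (by norm_num) (by norm_num)
    (le_abs.2 (Or.inr (by linarith [hθ.1.1, hθ.1.2])))
    (le_abs.2 (Or.inr (by linarith [hθ.2.1, hθ.2.2]))))

theorem le_normSq_digitRemainder_one : 7.52 ≤ normSq (digitRemainder θ 1) := by
  obtain ⟨⟨h2, h2'⟩, ⟨h3, h3'⟩, h4, h4'⟩ := hθ.monomial_bounds
  refine le_trans (by norm_num) (hθ.le_normSq_cubic (a := -1) (b := 1) (c := 2) (d := -1)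
    (by norm_num [digitRemainder]; ring) (X := 2.54) (Y := 1.34) (by norm_num) (by norm_num)
    (le_abs.2 (Or.inr (by linarith [hθ.1.1, hθ.1.2, hθ.2.1, hθ.2.2])))
    (le_abs.2 (Or.inl (by linarith [hθ.1.1, hθ.1.2, hθ.2.1, hθ.2.2]))))

theorem le_normSq_digitRemainder_one_add : 7.52 ≤ normSq (digitRemainder θ 1 + θ) := by
  obtain ⟨⟨h2, h2'⟩, ⟨h3, h3'⟩, h4, h4'⟩ := hθ.monomial_bounds
  refine le_trans (by norm_num) (hθ.le_normSq_cubic (a := -1) (b := 2) (c := 2) (d := -1)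
    (by norm_num [digitRemainder]; ring) (X := 2.6) (Y := 2.3) (by norm_num) (by norm_num)
    (le_abs.2 (Or.inr (by linarith [hθ.1.1, hθ.1.2, hθ.2.1, hθ.2.2])))
    (le_abs.2 (Or.inl (by linarith [hθ.1.1, hθ.1.2, hθ.2.1, hθ.2.2]))))

theorem le_normSq_digitRemainder_sub {n : ℕ} {d : ℤ} (hd : |d| ≤ 1)
    (hne : d ≠ signPattern n) : 7.52 ≤ normSq (digitRemainder θ n - d * θ) := by
  have with_neg : ∀ {v : ℂ}, 7.52 ≤ normSq v → 7.52 ≤ normSq v ∧ 7.52 ≤ normSq (-v) :=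
    fun hv => ⟨hv, by rwa [normSq_neg]⟩
  obtain ⟨h0, h0'⟩ := with_neg hθ.le_normSq_digitRemainder_zero
  obtain ⟨h0s, h0s'⟩ := with_neg hθ.le_normSq_digitRemainder_zero_sub
  obtain ⟨h1, h1'⟩ := with_neg hθ.le_normSq_digitRemainder_one
  obtain ⟨h1a, h1a'⟩ := with_neg hθ.le_normSq_digitRemainder_one_add
  simp only [digitRemainder, Nat.reduceMod, Nat.reduceEqDiff, reduceIte]
    at h0 h0' h0s h0s' h1 h1' h1a h1a'
  have h := Nat.mod_lt n four_pos
  obtain rfl | rfl | rfl : d = -1 ∨ d = 0 ∨ d = 1 := by rw [abs_le] at hd; omega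
  all_goals
    interval_cases hn : n % 4 <;> simp [signPattern, hn] at hne <;>
      simp [digitRemainder, hn] <;> ring_nf at * <;> assumption

theorem eq_signPattern_of_hasSum (hroot : θ ^ 4 = θ ^ 3 + θ ^ 2 + θ + 1) {d : ℕ → ℤ}
    (hd : ∀ k, |d k| ≤ 1) {n : ℕ}
    (h : HasSum (fun k => (d (n + k) : ℂ) * θ ^ (k + 1)) (digitRemainder θ n)) :
    d n = signPattern n ∧
      HasSum (fun k => (d (n + 1 + k) : ℂ) * θ ^ (k + 1)) (digitRemainder θ (n + 1)) := by
  have htail : HasSum (fun k => θ * ((d (n + 1 + k) : ℂ) * θ ^ (k + 1)))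
      (digitRemainder θ n - d n * θ) := by
    have h1 := (hasSum_nat_add_iff' 1).2 h
    rw [Finset.sum_range_one, add_zero, zero_add, pow_one] at h1
    refine h1.congr_fun fun k => ?_
    rw [show n + (k + 1) = n + 1 + k by omega]
    ring
  have hdn : d n = signPattern n := by
    by_contra hne
    refine (hθ.le_normSq_digitRemainder_sub (hd n) hne).not_gt
      (hθ.normSq_lt_of_hasSum (fun k => hd (n + 1 + k)) (htail.congr_fun fun k => by ring))
  refine ⟨hdn, (hasSum_mul_left_iff hθ.ne_zero).1 ?_⟩
  rw [← digitRemainder_sub_signPattern hroot, ← hdn]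
  exact htail

theorem eq_signPattern (hroot : θ ^ 4 = θ ^ 3 + θ ^ 2 + θ + 1) {d : ℕ → ℤ}
    (hd : ∀ k, |d k| ≤ 1) (h : HasSum (fun k => (d k : ℂ) * θ ^ (k + 1)) (digitRemainder θ 0))
    (n : ℕ) : d n = signPattern n := by
  suffices ∀ n, HasSum (fun k => (d (n + k) : ℂ) * θ ^ (k + 1)) (digitRemainder θ n) from
    (hθ.eq_signPattern_of_hasSum hroot hd (this n)).1
  intro n
  induction n with
  | zero => simpa using h
  | succ n ih => exact (hθ.eq_signPattern_of_hasSum hroot hd ih).2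

theorem eq_periodicDigits (hroot : θ ^ 4 = θ ^ 3 + θ ^ 2 + θ + 1) {ε δ : ℤ → ℕ}
    (hε : IsExpansion 4 ε) (hδ : IsExpansion 4 δ) {y : ℂ}
    (hεy : HasSum (fun i => (ε i : ℂ) * θ ^ i) (y + (θ ^ (-2 : ℤ) + θ⁻¹ + θ)))
    (hδy : HasSum (fun i => (δ i : ℂ) * θ ^ i) y) : ε = periodicDigits 1 2 := by
  set d : ℕ → ℤ := fun k => ε (4 + k) - δ (4 + k)
  have hd : ∀ k, |d k| ≤ 1 := fun k => by
    have := hε.1 (4 + k); have := hδ.1 (4 + k); simp only [d]; rw [abs_le]; omega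
  have hsum : HasSum (fun k => (d k : ℂ) * θ ^ (k + 1)) (digitRemainder θ 0) := by
    have h := ((hεy.sub hδy).mul_left (θ ^ (-3 : ℤ)))
    rw [← hasSum_nat_add_iff_of_eq_zero (l := 4) fun i hi => by
      simp [hε.2.1 i hi, hδ.2.1 i hi], add_sub_cancel_left] at h
    have hval : θ ^ (-3 : ℤ) * (θ ^ (-2 : ℤ) + θ⁻¹ + θ) = digitRemainder θ 0 := by
      have h0 := hθ.ne_zero
      simp only [digitRemainder, Nat.zero_mod, if_true, zpow_neg, zpow_ofNat]
      field_simp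
      linear_combination (-θ ^ 4 - θ ^ 3 + θ ^ 2 - 1) * hroot
    rw [hval] at h
    refine h.congr_fun fun k => ?_
    have hpow : θ ^ (-3 : ℤ) * θ ^ ((4 : ℤ) + k) = θ ^ (k + 1) := by
      rw [← zpow_add₀ hθ.ne_zero, ← zpow_natCast]; congr 1; push_cast; ring
    simp only [d, ← hpow]
    push_cast
    ring
  have hpat := hθ.eq_signPattern hroot hd hsum
  funext i
  by_cases hi : 4 ≤ i
  · obtain ⟨n, rfl⟩ : ∃ n : ℕ, i = 4 + n := ⟨(i - 4).toNat, by omega⟩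
    have h1 := hpat n
    have := hε.1 (4 + n); have := hδ.1 (4 + n)
    simp only [d, signPattern, periodicDigits] at h1 ⊢
    split_ifs at h1 ⊢ <;> omega
  · rw [hε.2.1 i (by omega), periodicDigits, if_neg (by omega)]

end IsNearRoot

theorem Eset_amm_general (β₂ : ℝ) (β₃ : ℂ)
    (hβ₂neg : -1 < β₂) (hβ₂pos : β₂ < 0)
    (hβ₂root : β₂ ^ 4 = β₂ ^ 3 + β₂ ^ 2 + β₂ + 1)
    (hβ₃abs : ‖β₃‖ < 1) (hβ₃im : β₃.im ≠ 0)
    (hβ₃root : β₃ ^ 4 = β₃ ^ 3 + β₃ ^ 2 + β₃ + 1)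
    (α : ℝ × ℂ) (hα : α = (β₂, β₃)) :
    Eset α (α ^ (-2 : ℤ) + α⁻¹ + α) = {(α ^ 5 + α ^ 6) / (1 - α ^ 4)} := by
  subst hα
  have hθ := isNearRoot_of_root hβ₃abs hβ₃im hβ₃root
  have hβ₂ : ‖β₂‖ < 1 := by rw [Real.norm_eq_abs, abs_lt]; constructor <;> linarith
  have hpt := expSum_periodicDigits (r := 1) (s := 2) hβ₂ hθ.norm_lt_one
    (by norm_num) (by norm_num) (by norm_num)
  refine Set.eq_singleton_iff_unique_mem.2
    ⟨⟨⟨_, isExpansion_periodicDigits 1 2, hpt⟩, ?_⟩, ?_⟩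
  · refine ⟨_, ⟨periodicDigits 0 3, isExpansion_periodicDigits 0 3,
      expSum_periodicDigits hβ₂ hθ.norm_lt_one (by norm_num) (by norm_num) (by norm_num)⟩, ?_⟩
    exact Prod.ext
      (periodic_sum_add_shift hβ₂pos.ne
        (one_sub_pow_ne_zero_of_norm_lt_one hβ₂ four_ne_zero) hβ₂root)
      (periodic_sum_add_shift hθ.ne_zero
        (one_sub_pow_ne_zero_of_norm_lt_one hθ.norm_lt_one four_ne_zero) hβ₃root)
  · rintro _ ⟨⟨ε, hε, hz⟩, w, ⟨δ, hδ, hw⟩, rfl⟩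
    obtain rfl :=
      hθ.eq_periodicDigits hβ₃root hε hδ (expSum_mk_iff.1 hz).2 (expSum_mk_iff.1 hw).2
    exact hz.unique hpt

theorem Eset_amm (β β₂ : ℝ) (β₃ : ℂ)
    (hβ : 1 < β) (hβroot : β ^ 4 = β ^ 3 + β ^ 2 + β + 1)
    (hβ₂neg : -1 < β₂) (hβ₂pos : β₂ < 0)
    (hβ₂root : β₂ ^ 4 = β₂ ^ 3 + β₂ ^ 2 + β₂ + 1)
    (hβ₃abs : ‖β₃‖ < 1) (hβ₃im : β₃.im ≠ 0)
    (hβ₃root : β₃ ^ 4 = β₃ ^ 3 + β₃ ^ 2 + β₃ + 1)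
    (α : ℝ × ℂ) (hα : α = (β₂, β₃)) :
    Eset α (α ^ (-2 : ℤ) + α⁻¹ + α) = {(α ^ 5 + α ^ 6) / (1 - α ^ 4)} :=
  Eset_amm_general β₂ β₃ hβ₂neg hβ₂pos hβ₂root hβ₃abs hβ₃im hβ₃root α hα
end
end
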